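/- arXiv:1904.11029 — 3 statements merged into one kernel-verified Lean document; each statement's English description precedes it below -/
import Mathlib

section
/- (Theorem 7.2, identification of inequalities) For w, w' ∈ W and 1 ≤ i, i' ≤ d, the linear functionals L_{w,i} and L_{w',i'} on ℝ^R are equal if and only if i = i' and w^{-1}w' ∈ W_{[d]∖N(i)}, the parabolic subgroup of W generated by {s_k : k ∉ N(i)}. -/
open scoped RealInnerProductSpace Pointwise

section Defs

variable {V : Type*} [NormedAddCommGroup V] [InnerProductSpace ℝ V]

/-- The reflection `s_α(x) = x - (2⟨x,α⟩/⟨α,α⟩) α`. -/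
noncomputable def reflFormula (α x : V) : V :=
  x - ((2 * ⟪x, α⟫) / ⟪α, α⟫) • α

/-- `g` is the reflection across the hyperplane orthogonal to `α`. -/
def IsReflection (g : V ≃ₗ[ℝ] V) (α : V) : Prop :=
  ∀ x, g x = reflFormula α x

/-- A finite root system in `V`: a finite spanning set of nonzero vectors, whose only scalar
multiples in `Φ` are `±α`, stable under each reflection `s_α`. -/
structure IsRootSystem (Φ : Set V) : Prop where
  finite : Φ.Finite
  spans : Submodule.span ℝ Φ = ⊤
  ne_zero : ∀ α ∈ Φ, α ≠ 0
  smul_mem : ∀ α ∈ Φ, ∀ c : ℝ, c • α ∈ Φ → c = 1 ∨ c = -1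
  refl_maps : ∀ α ∈ Φ, reflFormula α '' Φ = Φ

/-- The Weyl group of `Φ`: the subgroup of `GL(V)` generated by the reflections `s_α`, `α ∈ Φ`. -/
noncomputable def weylGroup (Φ : Set V) : Subgroup (V ≃ₗ[ℝ] V) :=
  Subgroup.closure {g | ∃ α ∈ Φ, IsReflection g α}

/-- `a 0, …, a (d-1)` is a system of simple roots of `Φ`: a basis of `V` contained in `Φ` such
that every root is a combination of the `a i` with all coefficients `≥ 0` or all `≤ 0`. -/
structure IsSimpleSystem (Φ : Set V) {d : ℕ} (a : Fin d → V) : Prop where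
  mem : ∀ i, a i ∈ Φ
  indep : LinearIndependent ℝ a
  spans : Submodule.span ℝ (Set.range a) = ⊤
  sign : ∀ β ∈ Φ, ∃ c : Fin d → ℝ,
    ((∀ i, 0 ≤ c i) ∨ (∀ i, c i ≤ 0)) ∧ β = ∑ i, c i • a i

/-- The coroot `α^∨ = 2α/⟨α,α⟩`. -/
noncomputable def coroot (α : V) : V := (2 / ⟪α, α⟫) • α

/-- Cartan matrix entry `A_{ij} = ⟨α_i^∨, α_j⟩`. -/
noncomputable def cartan {d : ℕ} (a : Fin d → V) (i j : Fin d) : ℝ :=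
  ⟪coroot (a i), a j⟫

/-- `N(i) = {j ≠ i : ⟨α_i, α_j⟩ ≠ 0}`, the neighbours of `i` in the Dynkin diagram. -/
noncomputable def Nset {d : ℕ} (a : Fin d → V) (i : Fin d) : Finset (Fin d) :=
  Finset.univ.filter fun j => j ≠ i ∧ ⟪a i, a j⟫ ≠ 0

/-- The set `R = W{λ_1, …, λ_d}` of the conjugates of the fundamental weights. -/
def weightConjugates (Φ : Set V) {d : ℕ} (lam : Fin d → V) : Set V :=
  {x | ∃ w ∈ weylGroup Φ, ∃ i, x = w (lam i)}

/-- `h` satisfies the local Φ-submodular inequalities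
`h(wλ_i) + h(w s_i λ_i) ≥ Σ_{j ∈ N(i)} (−A_{ji}) h(wλ_j)`. -/
noncomputable def SatisfiesLocal (Φ : Set V) {d : ℕ} (a lam : Fin d → V) (h : V → ℝ) : Prop :=
  ∀ w ∈ weylGroup Φ, ∀ i : Fin d,
    h (w (lam i)) + h (w (reflFormula (a i) (lam i))) ≥
      ∑ j ∈ Nset a i, (-(cartan a j i)) * h (w (lam j))

/-- `F` is a face of `P`: the set of points of `P` maximizing `⟨u, ·⟩` for some `u ∈ V`. -/
def IsFaceOf (P F : Set V) : Prop :=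
  ∃ u : V, F = {v ∈ P | ∀ x ∈ P, ⟪u, x⟫ ≤ ⟪u, v⟫}

end Defs

/-- A polytope: the convex hull of a nonempty finite subset. -/
def IsPolytope {V : Type*} [AddCommGroup V] [Module ℝ V] (P : Set V) : Prop :=
  ∃ S : Finset V, S.Nonempty ∧ P = convexHull ℝ (S : Set V)

/-- The linear functional `L_{w,i}` on `ℝ^R` given by
`L_{w,i}(h) = h(wλ_i) + h(w s_i λ_i) − Σ_{j∈N(i)} (−A_{ji}) h(wλ_j)`. -/
noncomputable def Lfun {V : Type*} [NormedAddCommGroup V] [InnerProductSpace ℝ V]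
    {d : ℕ} (a lam : Fin d → V) (w : V ≃ₗ[ℝ] V) (i : Fin d) (h : V → ℝ) : ℝ :=
  h (w (lam i)) + h (w (reflFormula (a i) (lam i))) -
    ∑ j ∈ Nset a i, (-(cartan a j i)) * h (w (lam j))

/-- The parabolic subgroup `W_I` generated by the simple reflections `{s_k : k ∈ I}`. -/
noncomputable def parabolic {V : Type*} [NormedAddCommGroup V] [InnerProductSpace ℝ V]
    {d : ℕ} (a : Fin d → V) (I : Set (Fin d)) : Subgroup (V ≃ₗ[ℝ] V) :=
  Subgroup.closure {g | ∃ k ∈ I, IsReflection g (a k)}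

section Aux

variable {V : Type*} [NormedAddCommGroup V] [InnerProductSpace ℝ V]

lemma reflFormula_eq (α x : V) :
    reflFormula α x = x - ((2 * ⟪x, α⟫) / ⟪α, α⟫) • α := rfl

lemma inner_self_pos' {β : V} (h : β ≠ 0) : (0:ℝ) < ⟪β, β⟫ :=
  lt_of_le_of_ne real_inner_self_nonneg (Ne.symm (inner_self_ne_zero.mpr h))

lemma reflFormula_zero_self (α x : V) (h : α = 0) : reflFormula α x = x := by
  simp [reflFormula, h]

lemma reflFormula_involutive (α x : V) : reflFormula α (reflFormula α x) = x := by
  by_cases h : (⟪α, α⟫ : ℝ) = 0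
  · have h0 : α = 0 := inner_self_eq_zero.mp h
    simp [reflFormula, h0]
  · simp only [reflFormula, inner_sub_left, real_inner_smul_left]
    have : (2 * (⟪x, α⟫ - 2 * ⟪x, α⟫ / ⟪α, α⟫ * ⟪α, α⟫)) / ⟪α, α⟫
        = -(2 * ⟪x, α⟫ / ⟪α, α⟫) := by
      field_simp
      ring
    rw [this, neg_smul, sub_neg_eq_add]
    abel

/-- The reflection in `α` as a linear map. -/
noncomputable def srL (α : V) : V →ₗ[ℝ] V where
  toFun x := reflFormula α x
  map_add' x y := by
    simp only [reflFormula, inner_add_left]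
    rw [show 2 * (⟪x, α⟫ + ⟪y, α⟫) = 2 * ⟪x, α⟫ + 2 * ⟪y, α⟫ by ring, add_div, add_smul]
    abel
  map_smul' c x := by
    simp only [reflFormula, real_inner_smul_left, RingHom.id_apply, smul_sub, smul_smul]
    rw [show 2 * (c * ⟪x, α⟫) = c * (2 * ⟪x, α⟫) by ring, mul_div_assoc]

/-- The reflection in `α` as a linear equivalence. -/
noncomputable def sr (α : V) : V ≃ₗ[ℝ] V :=
  { srL α with
    invFun := srL α
    left_inv := fun x => reflFormula_involutive α x
    right_inv := fun x => reflFormula_involutive α x }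

@[simp] lemma sr_apply (α x : V) : sr α x = reflFormula α x := rfl

lemma sr_mul_self (α : V) : sr α * sr α = 1 := by
  ext x
  exact reflFormula_involutive α x

lemma sr_inv (α : V) : (sr α)⁻¹ = sr α := by
  rw [eq_comm, eq_inv_iff_mul_eq_one, sr_mul_self]

lemma isReflection_sr (α : V) : IsReflection (sr α) α := fun _ => rfl

lemma IsReflection.eq_sr {g : V ≃ₗ[ℝ] V} {α : V} (h : IsReflection g α) : g = sr α := by
  ext x; exact h x

lemma sr_neg (α : V) : sr (-α) = sr α := by
  ext x
  simp only [sr_apply, reflFormula, inner_neg_left, inner_neg_right, neg_neg, smul_neg,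
    mul_neg, neg_div, neg_smul]

lemma refl_inner (α : V) (hα : (⟪α, α⟫ : ℝ) ≠ 0) (x y : V) :
    ⟪reflFormula α x, reflFormula α y⟫ = ⟪x, y⟫ := by
  simp only [reflFormula, inner_sub_left, inner_sub_right, real_inner_smul_left,
    real_inner_smul_right]
  have hxy : ⟪y, α⟫ = ⟪α, y⟫ := real_inner_comm _ _
  field_simp
  rw [hxy]
  ring

lemma mul_apply' (e₁ e₂ : V ≃ₗ[ℝ] V) (x : V) : (e₁ * e₂) x = e₁ (e₂ x) := rfl

lemma inv_apply' (e : V ≃ₗ[ℝ] V) (x : V) : e⁻¹ x = e.symm x := rfl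

lemma one_apply' (x : V) : (1 : V ≃ₗ[ℝ] V) x = x := rfl

lemma sr_conj {u : V ≃ₗ[ℝ] V} (hu : ∀ x y : V, ⟪u x, u y⟫ = ⟪x, y⟫) (α : V) :
    sr (u α) = u * sr α * u⁻¹ := by
  ext x
  have hx : u (u⁻¹ x) = x := u.apply_symm_apply x
  have h1 : ⟪x, u α⟫ = ⟪u⁻¹ x, α⟫ := by
    conv_lhs => rw [← hx]
    exact hu _ _
  have h2 : (⟪u α, u α⟫ : ℝ) = ⟪α, α⟫ := hu _ _
  rw [mul_apply', mul_apply']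
  simp only [sr_apply, reflFormula, h1, h2, map_sub, map_smul, inv_apply']
  rw [show u (u.symm x) = x from u.apply_symm_apply x]

end Aux
section Coord

variable {V : Type*} [NormedAddCommGroup V] [InnerProductSpace ℝ V]
variable {Φ : Set V} {d : ℕ} {a lam : Fin d → V}

/-- Coordinate functional w.r.t. the simple basis. -/
noncomputable def coordf (a lam : Fin d → V) (m : Fin d) (x : V) : ℝ :=
  2 * ⟪x, lam m⟫ / ⟪a m, a m⟫

lemma apos (hΦ : IsRootSystem Φ) (ha : IsSimpleSystem Φ a) (m : Fin d) :
    (0 : ℝ) < ⟪a m, a m⟫ :=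
  inner_self_pos' (hΦ.ne_zero _ (ha.mem m))

lemma lam_inner (hΦ : IsRootSystem Φ) (ha : IsSimpleSystem Φ a)
    (hlam : ∀ i j, ⟪lam i, coroot (a j)⟫ = if i = j then (1 : ℝ) else 0) (m k : Fin d) :
    ⟪lam m, a k⟫ = if m = k then ⟪a k, a k⟫ / 2 else 0 := by
  have h := hlam m k
  rw [coroot, real_inner_smul_right] at h
  have hk := (apos hΦ ha k).ne'
  rcases eq_or_ne m k with rfl | hmk
  · simp only [if_pos rfl, ↓reduceIte] at h ⊢
    field_simp at h ⊢
    linarith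
  · simp only [if_neg hmk] at h ⊢
    field_simp at h
    linarith

lemma coordf_add (m : Fin d) (x y : V) :
    coordf a lam m (x + y) = coordf a lam m x + coordf a lam m y := by
  simp [coordf, inner_add_left, mul_add, add_div]

lemma coordf_smul (m : Fin d) (c : ℝ) (x : V) :
    coordf a lam m (c • x) = c * coordf a lam m x := by
  simp only [coordf, real_inner_smul_left]
  ring

lemma coordf_sub (m : Fin d) (x y : V) :
    coordf a lam m (x - y) = coordf a lam m x - coordf a lam m y := by
  simp [coordf, inner_sub_left, mul_sub, sub_div]

lemma coordf_neg (m : Fin d) (x : V) : coordf a lam m (-x) = -coordf a lam m x := by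
  simp [coordf, inner_neg_left, neg_div]

lemma coordf_sum {ι : Type*} (m : Fin d) (s : Finset ι) (v : ι → V) :
    coordf a lam m (∑ k ∈ s, v k) = ∑ k ∈ s, coordf a lam m (v k) := by
  classical
  induction s using Finset.induction_on with
  | empty => simp [coordf]
  | insert k s' h ih => simp [Finset.sum_insert h, coordf_add, ih]

lemma coordf_simple (hΦ : IsRootSystem Φ) (ha : IsSimpleSystem Φ a)
    (hlam : ∀ i j, ⟪lam i, coroot (a j)⟫ = if i = j then (1 : ℝ) else 0) (m k : Fin d) :
    coordf a lam m (a k) = if k = m then 1 else 0 := by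
  have h : ⟪a k, lam m⟫ = ⟪lam m, a k⟫ := real_inner_comm _ _
  rw [coordf, h, lam_inner hΦ ha hlam m k]
  rcases eq_or_ne m k with rfl | hmk
  · have hk := (apos hΦ ha m).ne'
    rw [if_pos rfl, if_pos rfl]
    field_simp
  · rw [if_neg hmk, if_neg (Ne.symm hmk)]
    simp

lemma root_coord_eq (hΦ : IsRootSystem Φ) (ha : IsSimpleSystem Φ a)
    (hlam : ∀ i j, ⟪lam i, coroot (a j)⟫ = if i = j then (1 : ℝ) else 0)
    {c : Fin d → ℝ} {β : V} (hβ : β = ∑ m, c m • a m) (m : Fin d) :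
    coordf a lam m β = c m := by
  classical
  rw [hβ, coordf_sum]
  rw [Finset.sum_eq_single m]
  · rw [coordf_smul, coordf_simple hΦ ha hlam, if_pos rfl, mul_one]
  · intro k _ hk
    rw [coordf_smul, coordf_simple hΦ ha hlam, if_neg hk, mul_zero]
  · intro h; exact absurd (Finset.mem_univ m) h

lemma root_decomp (hΦ : IsRootSystem Φ) (ha : IsSimpleSystem Φ a)
    (hlam : ∀ i j, ⟪lam i, coroot (a j)⟫ = if i = j then (1 : ℝ) else 0)
    {β : V} (hβ : β ∈ Φ) : β = ∑ m, coordf a lam m β • a m := by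
  obtain ⟨c, _, hc⟩ := ha.sign β hβ
  have h2 : ∑ m, coordf a lam m β • a m = ∑ m, c m • a m :=
    Finset.sum_congr rfl fun m _ => by rw [root_coord_eq hΦ ha hlam hc m]
  rw [h2]
  exact hc

/-- `β` is a positive root. -/
def PosR (Φ : Set V) (a lam : Fin d → V) (β : V) : Prop :=
  β ∈ Φ ∧ ∀ m, 0 ≤ coordf a lam m β

lemma refl_mem (hΦ : IsRootSystem Φ) {α β : V} (hα : α ∈ Φ) (hβ : β ∈ Φ) :
    reflFormula α β ∈ Φ := by
  rw [← hΦ.refl_maps α hα]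
  exact ⟨β, hβ, rfl⟩

lemma refl_self_eq_neg {β : V} (hne : β ≠ 0) : reflFormula β β = -β := by
  have h : (⟪β, β⟫ : ℝ) ≠ 0 := (inner_self_pos' hne).ne'
  rw [reflFormula_eq, mul_div_assoc, div_self h, mul_one, two_smul]
  abel

lemma neg_mem (hΦ : IsRootSystem Φ) {β : V} (hβ : β ∈ Φ) : -β ∈ Φ := by
  have h := refl_mem hΦ hβ hβ
  rwa [refl_self_eq_neg (hΦ.ne_zero _ hβ)] at h

lemma pos_or (hΦ : IsRootSystem Φ) (ha : IsSimpleSystem Φ a)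
    (hlam : ∀ i j, ⟪lam i, coroot (a j)⟫ = if i = j then (1 : ℝ) else 0)
    {β : V} (hβ : β ∈ Φ) : PosR Φ a lam β ∨ PosR Φ a lam (-β) := by
  obtain ⟨c, hs, hc⟩ := ha.sign β hβ
  have he := fun m => root_coord_eq hΦ ha hlam hc m
  rcases hs with hs | hs
  · exact Or.inl ⟨hβ, fun m => (he m).symm ▸ hs m⟩
  · refine Or.inr ⟨neg_mem hΦ hβ, fun m => ?_⟩
    rw [coordf_neg, he m]
    linarith [hs m]

lemma not_pos_both (hΦ : IsRootSystem Φ) (ha : IsSimpleSystem Φ a)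
    (hlam : ∀ i j, ⟪lam i, coroot (a j)⟫ = if i = j then (1 : ℝ) else 0)
    {β : V} (h1 : PosR Φ a lam β) (h2 : PosR Φ a lam (-β)) : False := by
  have hz : ∀ m, coordf a lam m β = 0 := by
    intro m
    have := h2.2 m
    rw [coordf_neg] at this
    linarith [h1.2 m]
  have := root_decomp hΦ ha hlam h1.1
  rw [show ∑ m, coordf a lam m β • a m = 0 by
    apply Finset.sum_eq_zero; intro m _; rw [hz m, zero_smul]] at this
  exact hΦ.ne_zero _ h1.1 this

lemma pos_of_coord (hΦ : IsRootSystem Φ) (ha : IsSimpleSystem Φ a)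
    (hlam : ∀ i j, ⟪lam i, coroot (a j)⟫ = if i = j then (1 : ℝ) else 0)
    {β : V} (hβ : β ∈ Φ) {m : Fin d} (hm : 0 < coordf a lam m β) : PosR Φ a lam β := by
  rcases pos_or hΦ ha hlam hβ with h | h
  · exact h
  · exfalso
    have := h.2 m
    rw [coordf_neg] at this
    linarith

lemma simple_posR (hΦ : IsRootSystem Φ) (ha : IsSimpleSystem Φ a)
    (hlam : ∀ i j, ⟪lam i, coroot (a j)⟫ = if i = j then (1 : ℝ) else 0) (m : Fin d) :
    PosR Φ a lam (a m) := by
  refine ⟨ha.mem m, fun k => ?_⟩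
  rw [coordf_simple hΦ ha hlam]
  split <;> norm_num

lemma obtuse (hΦ : IsRootSystem Φ) (ha : IsSimpleSystem Φ a)
    (hlam : ∀ i j, ⟪lam i, coroot (a j)⟫ = if i = j then (1 : ℝ) else 0)
    {i j : Fin d} (hij : i ≠ j) : (⟪a i, a j⟫ : ℝ) ≤ 0 := by
  by_contra hpos
  push_neg at hpos
  set t : ℝ := 2 * ⟪a j, a i⟫ / ⟪a i, a i⟫ with ht
  have htpos : 0 < t := by
    apply div_pos _ (apos hΦ ha i)
    rw [real_inner_comm]
    linarith
  have hmem : reflFormula (a i) (a j) ∈ Φ := refl_mem hΦ (ha.mem i) (ha.mem j)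
  have hform : reflFormula (a i) (a j) = a j - t • a i := rfl
  have hcj : coordf a lam j (reflFormula (a i) (a j)) = 1 := by
    rw [hform, coordf_sub, coordf_smul, coordf_simple hΦ ha hlam,
      coordf_simple hΦ ha hlam, if_pos rfl, if_neg hij]
    ring
  have hci : coordf a lam i (reflFormula (a i) (a j)) = -t := by
    rw [hform, coordf_sub, coordf_smul, coordf_simple hΦ ha hlam,
      coordf_simple hΦ ha hlam, if_pos rfl, if_neg (Ne.symm hij)]
    ring
  have hP : PosR Φ a lam (reflFormula (a i) (a j)) :=
    pos_of_coord hΦ ha hlam hmem (by rw [hcj]; norm_num)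
  have := hP.2 i
  rw [hci] at this
  linarith

lemma pos_reflect (hΦ : IsRootSystem Φ) (ha : IsSimpleSystem Φ a)
    (hlam : ∀ i j, ⟪lam i, coroot (a j)⟫ = if i = j then (1 : ℝ) else 0)
    {β : V} (k : Fin d) (hβ : PosR Φ a lam β) (hne : β ≠ a k) :
    PosR Φ a lam (reflFormula (a k) β) := by
  classical
  set t : ℝ := 2 * ⟪β, a k⟫ / ⟪a k, a k⟫ with ht
  have hform : reflFormula (a k) β = β - t • a k := rfl
  have hmem : reflFormula (a k) β ∈ Φ := refl_mem hΦ (ha.mem k) hβ.1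
  by_cases hex : ∃ m, m ≠ k ∧ 0 < coordf a lam m β
  · obtain ⟨m, hmk, hm⟩ := hex
    apply pos_of_coord hΦ ha hlam hmem (m := m)
    rw [hform, coordf_sub, coordf_smul, coordf_simple hΦ ha hlam, if_neg (Ne.symm hmk), mul_zero,
      sub_zero]
    exact hm
  · push_neg at hex
    exfalso
    have hzero : ∀ m, m ≠ k → coordf a lam m β = 0 := by
      intro m hm
      exact le_antisymm (hex m hm) (hβ.2 m)
    have hcol : β = coordf a lam k β • a k := by
      conv_lhs => rw [root_decomp hΦ ha hlam hβ.1]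
      rw [Finset.sum_eq_single k]
      · intro m _ hm; rw [hzero m hm, zero_smul]
      · intro h; exact absurd (Finset.mem_univ k) h
    have hc := hΦ.smul_mem (a k) (ha.mem k) _ (hcol ▸ hβ.1)
    rcases hc with hc | hc
    · rw [hc, one_smul] at hcol; exact hne hcol
    · have := hβ.2 k
      rw [hc] at hcol this
      linarith

end Coord
section Weyl

variable {V : Type*} [NormedAddCommGroup V] [InnerProductSpace ℝ V]
variable {Φ : Set V} {d : ℕ} {a lam : Fin d → V}

lemma weyl_orth (hΦ : IsRootSystem Φ) {w : V ≃ₗ[ℝ] V} (hw : w ∈ weylGroup Φ) :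
    ∀ x y : V, ⟪w x, w y⟫ = ⟪x, y⟫ := by
  induction hw using Subgroup.closure_induction with
  | mem g hg =>
    obtain ⟨α, hα, hrefl⟩ := hg
    intro x y
    rw [hrefl x, hrefl y]
    exact refl_inner α (inner_self_pos' (hΦ.ne_zero _ hα)).ne' x y
  | one => intro x y; rfl
  | mul g h _ _ hg hh => intro x y; rw [mul_apply', mul_apply', hg, hh]
  | inv g _ hg =>
    intro x y
    have := hg (g⁻¹ x) (g⁻¹ y)
    rw [show g (g⁻¹ x) = x from g.apply_symm_apply x,
      show g (g⁻¹ y) = y from g.apply_symm_apply y] at this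
    exact this.symm

lemma weyl_maps_root (hΦ : IsRootSystem Φ) {w : V ≃ₗ[ℝ] V} (hw : w ∈ weylGroup Φ) :
    ∀ β ∈ Φ, w β ∈ Φ := by
  have key : ∀ β ∈ Φ, w β ∈ Φ ∧ w⁻¹ β ∈ Φ := by
    induction hw using Subgroup.closure_induction with
    | mem g hg =>
      obtain ⟨α, hα, hrefl⟩ := hg
      intro β hβ
      have h1 : g β ∈ Φ := by rw [hrefl β]; exact refl_mem hΦ hα hβ
      have h2 : g⁻¹ = g := by rw [hrefl.eq_sr]; exact sr_inv α
      exact ⟨h1, by rw [h2, hrefl β]; exact refl_mem hΦ hα hβ⟩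
    | one => intro β hβ; exact ⟨hβ, hβ⟩
    | mul g h _ _ hg hh =>
      intro β hβ
      refine ⟨by rw [mul_apply']; exact (hg _ ((hh β hβ).1)).1, ?_⟩
      rw [mul_inv_rev, mul_apply']
      exact (hh _ ((hg β hβ).2)).2
    | inv g _ hg =>
      intro β hβ
      exact ⟨(hg β hβ).2, by rw [inv_inv]; exact (hg β hβ).1⟩
  exact fun β hβ => (key β hβ).1

lemma sr_mem_weyl (hΦ : IsRootSystem Φ) {β : V} (hβ : β ∈ Φ) : sr β ∈ weylGroup Φ :=
  Subgroup.subset_closure ⟨β, hβ, isReflection_sr β⟩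

/-- Product of simple reflections along a list of indices. -/
noncomputable def prodL (a : Fin d → V) (L : List (Fin d)) : V ≃ₗ[ℝ] V :=
  (L.map fun k => sr (a k)).prod

@[simp] lemma prodL_nil : prodL a ([] : List (Fin d)) = 1 := rfl

lemma prodL_cons (k : Fin d) (T : List (Fin d)) :
    prodL a (k :: T) = sr (a k) * prodL a T := by
  simp [prodL]

lemma prodL_append (L₁ L₂ : List (Fin d)) :
    prodL a (L₁ ++ L₂) = prodL a L₁ * prodL a L₂ := by
  simp [prodL]

lemma prodL_concat (L : List (Fin d)) (k : Fin d) :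
    prodL a (L.concat k) = prodL a L * sr (a k) := by
  rw [List.concat_eq_append, prodL_append, prodL_cons, prodL_nil, mul_one]

lemma prodL_mem_weyl (hΦ : IsRootSystem Φ) (ha : IsSimpleSystem Φ a) (L : List (Fin d)) :
    prodL a L ∈ weylGroup Φ := by
  induction L with
  | nil => exact one_mem _
  | cons k T ih => rw [prodL_cons]; exact mul_mem (sr_mem_weyl hΦ (ha.mem k)) ih

lemma prodL_inv (L : List (Fin d)) : (prodL a L)⁻¹ = prodL a L.reverse := by
  induction L with
  | nil => simp
  | cons k T ih =>
    rw [prodL_cons, mul_inv_rev, ih, sr_inv, List.reverse_cons, ← List.concat_eq_append,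
      prodL_concat]

/-- Height of a vector: sum of its simple-basis coordinates. -/
noncomputable def htf (a lam : Fin d → V) (x : V) : ℝ := ∑ m, coordf a lam m x

lemma htf_simple (hΦ : IsRootSystem Φ) (ha : IsSimpleSystem Φ a)
    (hlam : ∀ i j, ⟪lam i, coroot (a j)⟫ = if i = j then (1 : ℝ) else 0) (k : Fin d) :
    htf a lam (a k) = 1 := by
  rw [htf]
  rw [Finset.sum_eq_single k]
  · rw [coordf_simple hΦ ha hlam, if_pos rfl]
  · intro m _ hm; rw [coordf_simple hΦ ha hlam, if_neg (Ne.symm hm)]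
  · intro h; exact absurd (Finset.mem_univ k) h

lemma htf_sub_smul (k : Fin d) (x : V) (t : ℝ) :
    htf a lam (x - t • a k) = htf a lam x - t * htf a lam (a k) := by
  simp only [htf, coordf_sub, coordf_smul, Finset.sum_sub_distrib, Finset.mul_sum]

/-- Every root is a `W₀`-image of a simple root (up to sign handled via lists). -/
lemma root_conj_simple (hΦ : IsRootSystem Φ) (ha : IsSimpleSystem Φ a)
    (hlam : ∀ i j, ⟪lam i, coroot (a j)⟫ = if i = j then (1 : ℝ) else 0)
    {β : V} (hβ : β ∈ Φ) :
    ∃ (L : List (Fin d)) (m : Fin d), β = prodL a L (a m) ∨ β = -(prodL a L (a m)) := by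
  classical
  set S : Finset V := hΦ.finite.toFinset.filter
    (fun γ => PosR Φ a lam γ ∧ ∃ L : List (Fin d), γ = prodL a L β ∨ γ = prodL a L (-β)) with hS
  have hSne : S.Nonempty := by
    rcases pos_or hΦ ha hlam hβ with h | h
    · refine ⟨β, ?_⟩
      rw [hS, Finset.mem_filter, Set.Finite.mem_toFinset]
      exact ⟨hβ, h, [], Or.inl (by rw [prodL_nil, one_apply'])⟩
    · refine ⟨-β, ?_⟩
      rw [hS, Finset.mem_filter, Set.Finite.mem_toFinset]
      exact ⟨neg_mem hΦ hβ, h, [], Or.inr (by rw [prodL_nil, one_apply'])⟩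
  obtain ⟨γ, hγS, hγmin⟩ := S.exists_min_image (htf a lam) hSne
  rw [hS, Finset.mem_filter, Set.Finite.mem_toFinset] at hγS
  obtain ⟨hγΦ, hγpos, Lγ, hLγ⟩ := hγS
  -- the minimal element is simple
  have hsimple : ∃ m, γ = a m := by
    by_contra hno
    push_neg at hno
    have hγ0 : (0:ℝ) < ⟪γ, γ⟫ := inner_self_pos' (hΦ.ne_zero _ hγΦ)
    have hdecomp := root_decomp hΦ ha hlam hγΦ
    have hsum : (⟪γ, γ⟫ : ℝ) = ∑ m, coordf a lam m γ * ⟪a m, γ⟫ := by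
      nth_rewrite 1 [hdecomp]
      rw [sum_inner]
      exact Finset.sum_congr rfl fun m _ => real_inner_smul_left _ _ _
    have hex : ∃ m, 0 < coordf a lam m γ * ⟪a m, γ⟫ := by
      by_contra hall
      push_neg at hall
      have : (⟪γ, γ⟫ : ℝ) ≤ 0 := hsum ▸ Finset.sum_nonpos fun m _ => hall m
      linarith
    obtain ⟨m, hm⟩ := hex
    have hinner : (0:ℝ) < ⟪γ, a m⟫ := by
      rcases lt_or_ge 0 (⟪a m, γ⟫ : ℝ) with h | h
      · rwa [real_inner_comm]
      · exfalso
        have h1 := hγpos.2 m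
        nlinarith
    set t : ℝ := 2 * ⟪γ, a m⟫ / ⟪a m, a m⟫ with hdt
    have htpos : 0 < t := div_pos (by linarith) (apos hΦ ha m)
    have hγ' : PosR Φ a lam (reflFormula (a m) γ) :=
      pos_reflect hΦ ha hlam m hγpos (hno m)
    have hform : reflFormula (a m) γ = γ - t • a m := rfl
    have hγ'S : reflFormula (a m) γ ∈ S := by
      rw [hS, Finset.mem_filter, Set.Finite.mem_toFinset]
      refine ⟨hγ'.1, hγ', m :: Lγ, ?_⟩
      rcases hLγ with h | h
      · exact Or.inl (by rw [prodL_cons, mul_apply', ← h]; rfl)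
      · exact Or.inr (by rw [prodL_cons, mul_apply', ← h]; rfl)
    have hlt : htf a lam (reflFormula (a m) γ) < htf a lam γ := by
      rw [hform, htf_sub_smul, htf_simple hΦ ha hlam, mul_one]
      linarith
    exact absurd (hγmin _ hγ'S) (by linarith)
  obtain ⟨m, rfl⟩ := hsimple
  -- now γ = a m = prodL Lγ (±β)
  rcases hLγ with h | h
  · refine ⟨Lγ.reverse, m, Or.inl ?_⟩
    rw [← prodL_inv]
    have : (prodL a Lγ)⁻¹ (prodL a Lγ β) = β := by
      rw [inv_apply', LinearEquiv.symm_apply_apply]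
    rw [← this, ← h]
  · refine ⟨Lγ.reverse, m, Or.inr ?_⟩
    rw [← prodL_inv]
    have : (prodL a Lγ)⁻¹ (prodL a Lγ (-β)) = -β := by
      rw [inv_apply', LinearEquiv.symm_apply_apply]
    have h2 : (prodL a Lγ)⁻¹ (a m) = -β := by rw [← h] at this; exact this
    rw [h2, neg_neg]

/-- Reflections in roots are products of simple reflections. -/
lemma sr_root_eq_prodL (hΦ : IsRootSystem Φ) (ha : IsSimpleSystem Φ a)
    (hlam : ∀ i j, ⟪lam i, coroot (a j)⟫ = if i = j then (1 : ℝ) else 0)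
    {β : V} (hβ : β ∈ Φ) : ∃ L : List (Fin d), sr β = prodL a L := by
  obtain ⟨L, m, hLm⟩ := root_conj_simple hΦ ha hlam hβ
  have horth : ∀ x y : V, ⟪prodL a L x, prodL a L y⟫ = ⟪x, y⟫ :=
    weyl_orth hΦ (prodL_mem_weyl hΦ ha L)
  have key : sr (prodL a L (a m)) = prodL a L * sr (a m) * (prodL a L)⁻¹ :=
    sr_conj horth (a m)
  have hsrβ : sr β = prodL a L * sr (a m) * (prodL a L)⁻¹ := by
    rcases hLm with h | h
    · rw [h, key]
    · rw [h, sr_neg, key]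
  refine ⟨L ++ m :: L.reverse, ?_⟩
  rw [hsrβ, prodL_inv, prodL_append, prodL_cons, mul_assoc]

/-- Every Weyl group element is a product of simple reflections. -/
lemma weyl_eq_prodL (hΦ : IsRootSystem Φ) (ha : IsSimpleSystem Φ a)
    (hlam : ∀ i j, ⟪lam i, coroot (a j)⟫ = if i = j then (1 : ℝ) else 0)
    {w : V ≃ₗ[ℝ] V} (hw : w ∈ weylGroup Φ) : ∃ L : List (Fin d), w = prodL a L := by
  induction hw using Subgroup.closure_induction with
  | mem g hg =>
    obtain ⟨α, hα, hrefl⟩ := hg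
    obtain ⟨L, hL⟩ := sr_root_eq_prodL hΦ ha hlam hα
    exact ⟨L, by rw [hrefl.eq_sr, hL]⟩
  | one => exact ⟨[], rfl⟩
  | mul g h _ _ hg hh =>
    obtain ⟨L₁, h1⟩ := hg
    obtain ⟨L₂, h2⟩ := hh
    exact ⟨L₁ ++ L₂, by rw [h1, h2, prodL_append]⟩
  | inv g _ hg =>
    obtain ⟨L, hL⟩ := hg
    exact ⟨L.reverse, by rw [hL, prodL_inv]⟩

end Weyl
section Chamber

variable {V : Type*} [NormedAddCommGroup V] [InnerProductSpace ℝ V]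
variable {Φ : Set V} {d : ℕ} {a lam : Fin d → V}

/-- The deletion lemma. -/
lemma deletion (hΦ : IsRootSystem Φ) (ha : IsSimpleSystem Φ a)
    (hlam : ∀ i j, ⟪lam i, coroot (a j)⟫ = if i = j then (1 : ℝ) else 0)
    {α : V} (hαΦ : α ∈ Φ) (hα : PosR Φ a lam α) :
    ∀ L : List (Fin d), ¬ PosR Φ a lam (prodL a L α) →
      ∃ L' : List (Fin d), L'.length + 1 = L.length ∧ prodL a L' = prodL a L * sr α := by
  intro L
  induction L with
  | nil =>
    intro hneg
    exact absurd (by rw [prodL_nil, one_apply']; exact hα) hneg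
  | cons k T ih =>
    intro hneg
    by_cases hT : PosR Φ a lam (prodL a T α)
    · -- prodL (k::T) α = sr (a k) (prodL T α) is not positive, so prodL T α = a k
      have happ : prodL a (k :: T) α = reflFormula (a k) (prodL a T α) := by
        rw [prodL_cons, mul_apply', sr_apply]
      have heq : prodL a T α = a k := by
        by_contra hne
        exact hneg (happ ▸ pos_reflect hΦ ha hlam k hT hne)
      have horth : ∀ x y : V, ⟪prodL a T x, prodL a T y⟫ = ⟪x, y⟫ :=
        weyl_orth hΦ (prodL_mem_weyl hΦ ha T)
      have hconj : sr (a k) = prodL a T * sr α * (prodL a T)⁻¹ := by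
        rw [← heq]; exact sr_conj horth α
      refine ⟨T, by simp, ?_⟩
      rw [prodL_cons]
      symm
      rw [hconj]
      calc prodL a T * sr α * (prodL a T)⁻¹ * prodL a T * sr α
          = prodL a T * sr α * ((prodL a T)⁻¹ * prodL a T) * sr α := by
            simp [mul_assoc]
        _ = prodL a T * (sr α * sr α) := by
            rw [inv_mul_cancel]; simp [mul_assoc]
        _ = prodL a T := by rw [sr_mul_self, mul_one]
    · obtain ⟨L', hlen, hprod⟩ := ih hT
      refine ⟨k :: L', by simp [← hlen], ?_⟩
      rw [prodL_cons, hprod, prodL_cons, mul_assoc]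

lemma pos_image (hΦ : IsRootSystem Φ) (ha : IsSimpleSystem Φ a)
    (hlam : ∀ i j, ⟪lam i, coroot (a j)⟫ = if i = j then (1 : ℝ) else 0)
    {w : V ≃ₗ[ℝ] V} (hw : w ∈ weylGroup Φ) (hall : ∀ k, PosR Φ a lam (w (a k)))
    {β : V} (hβ : PosR Φ a lam β) : PosR Φ a lam (w β) := by
  have hmem : w β ∈ Φ := weyl_maps_root hΦ hw β hβ.1
  refine ⟨hmem, fun m => ?_⟩
  have hdecomp := root_decomp hΦ ha hlam hβ.1
  have : w β = ∑ k, coordf a lam k β • w (a k) := by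
    nth_rewrite 1 [hdecomp]
    rw [map_sum]
    exact Finset.sum_congr rfl fun k _ => by rw [map_smul]
  rw [this, coordf_sum]
  apply Finset.sum_nonneg
  intro k _
  rw [coordf_smul]
  exact mul_nonneg (hβ.2 k) ((hall k).2 m)

lemma exists_neg_simple (hΦ : IsRootSystem Φ) (ha : IsSimpleSystem Φ a)
    (hlam : ∀ i j, ⟪lam i, coroot (a j)⟫ = if i = j then (1 : ℝ) else 0)
    {w : V ≃ₗ[ℝ] V} (hw : w ∈ weylGroup Φ) (hw1 : w ≠ 1) :
    ∃ k, ¬ PosR Φ a lam (w (a k)) := by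
  by_contra hall
  push_neg at hall
  have hex : ∃ n : ℕ, ∃ L : List (Fin d), L.length = n ∧ w = prodL a L := by
    obtain ⟨L, hL⟩ := weyl_eq_prodL hΦ ha hlam hw
    exact ⟨L.length, L, rfl, hL⟩
  classical
  obtain ⟨L, hlen, hwL⟩ := Nat.find_spec hex
  have hLne : L ≠ [] := by
    intro h
    rw [h] at hwL
    exact hw1 (by rw [hwL, prodL_nil])
  obtain ⟨T, k, hTk⟩ := L.eq_nil_or_concat.resolve_left hLne
  have hwT : w = prodL a T * sr (a k) := by rw [hwL, hTk, prodL_concat]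
  have hvdef : prodL a T = w * sr (a k) := by
    rw [hwT, mul_assoc, sr_mul_self, mul_one]
  have hvneg : ¬ PosR Φ a lam (prodL a T (a k)) := by
    have : prodL a T (a k) = -(w (a k)) := by
      rw [hvdef, mul_apply', sr_apply, refl_self_eq_neg (hΦ.ne_zero _ (ha.mem k)), map_neg]
    rw [this]
    intro hneg
    exact not_pos_both hΦ ha hlam (hall k) hneg
  obtain ⟨L', hlen', hprod⟩ := deletion hΦ ha hlam (ha.mem k)
    (simple_posR hΦ ha hlam k) T hvneg
  have hwL' : w = prodL a L' := by
    rw [hprod, hvdef, mul_assoc, sr_mul_self, mul_one]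
  have hlenL : L.length = T.length + 1 := by rw [hTk, List.concat_eq_append]; simp
  have hsmall : L'.length < Nat.find hex := by
    omega
  exact Nat.find_min hex hsmall ⟨L', rfl, hwL'⟩

/-- The key chamber theorem: if `w` maps a dominant vector to a dominant vector, the two
are equal and `w` lies in the parabolic subgroup generated by the simple reflections
fixing the vector. -/
lemma chamber (hΦ : IsRootSystem Φ) (ha : IsSimpleSystem Φ a)
    (hlam : ∀ i j, ⟪lam i, coroot (a j)⟫ = if i = j then (1 : ℝ) else 0)
    {μ ν : V} (hμ : ∀ k, (0:ℝ) ≤ ⟪μ, a k⟫) (hν : ∀ k, (0:ℝ) ≤ ⟪ν, a k⟫)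
    {w : V ≃ₗ[ℝ] V} (hw : w ∈ weylGroup Φ) (hwμ : w μ = ν) :
    μ = ν ∧ w ∈ parabolic a {k | (⟪μ, a k⟫ : ℝ) = 0} := by
  classical
  obtain ⟨L, hL⟩ := weyl_eq_prodL hΦ ha hlam hw
  have key : ∀ n : ℕ, ∀ w : V ≃ₗ[ℝ] V, w ∈ weylGroup Φ → ∀ L : List (Fin d),
      w = prodL a L → L.length ≤ n → w μ = ν →
      μ = ν ∧ w ∈ parabolic a {k | (⟪μ, a k⟫ : ℝ) = 0} := by
    intro n
    induction n with
    | zero =>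
      intro w _ L hL hlen hwμ
      have : L = [] := List.length_eq_zero_iff.mp (Nat.le_zero.mp hlen)
      rw [this, prodL_nil] at hL
      rw [hL, one_apply'] at hwμ
      exact ⟨hwμ, hL ▸ one_mem _⟩
    | succ n ih =>
      intro w hw L hL hlen hwμ
      by_cases hw1 : w = 1
      · rw [hw1, one_apply'] at hwμ
        exact ⟨hwμ, hw1 ▸ one_mem _⟩
      · obtain ⟨k, hk⟩ := exists_neg_simple hΦ ha hlam hw hw1
        have hwak : w (a k) ∈ Φ := weyl_maps_root hΦ hw _ (ha.mem k)
        have hkneg : PosR Φ a lam (-(w (a k))) :=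
          (pos_or hΦ ha hlam hwak).resolve_left hk
        -- ⟪μ, a k⟫ = 0
        have hin1 : (⟪μ, a k⟫ : ℝ) = ⟪ν, w (a k)⟫ := by
          rw [← hwμ]
          exact (weyl_orth hΦ hw μ (a k)).symm
        have hin2 : (⟪ν, w (a k)⟫ : ℝ) ≤ 0 := by
          have hd := root_decomp hΦ ha hlam (neg_mem hΦ hwak)
          have : (⟪ν, -(w (a k))⟫ : ℝ) = ∑ m, coordf a lam m (-(w (a k))) * ⟪ν, a m⟫ := by
            nth_rewrite 1 [hd]
            rw [inner_sum]
            exact Finset.sum_congr rfl fun m _ => by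
              rw [real_inner_smul_right]
          have hge : (0:ℝ) ≤ ⟪ν, -(w (a k))⟫ := by
            rw [this]
            exact Finset.sum_nonneg fun m _ => mul_nonneg (hkneg.2 m) (hν m)
          rw [inner_neg_right] at hge
          linarith
        have hμk : (⟪μ, a k⟫ : ℝ) = 0 := le_antisymm (hin1 ▸ hin2) (hμ k)
        have hfix : sr (a k) μ = μ := by
          rw [sr_apply, reflFormula_eq, hμk, mul_zero, zero_div, zero_smul, sub_zero]
        obtain ⟨L', hlen', hprod⟩ := deletion hΦ ha hlam (ha.mem k)
          (simple_posR hΦ ha hlam k) L (by rw [← hL]; exact hk)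
        have hw' : w * sr (a k) ∈ weylGroup Φ := mul_mem hw (sr_mem_weyl hΦ (ha.mem k))
        have hwμ' : (w * sr (a k)) μ = ν := by rw [mul_apply', hfix, hwμ]
        have hlen'' : L'.length ≤ n := by omega
        obtain ⟨hμν, hpar⟩ := ih (w * sr (a k)) hw' L' (by rw [hprod, hL]) hlen'' hwμ'
        refine ⟨hμν, ?_⟩
        have hsk : sr (a k) ∈ parabolic a {k | (⟪μ, a k⟫ : ℝ) = 0} :=
          Subgroup.subset_closure ⟨k, hμk, isReflection_sr (a k)⟩
        have : w = (w * sr (a k)) * sr (a k) := by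
          rw [mul_assoc, sr_mul_self, mul_one]
        rw [this]
        exact mul_mem hpar hsk
  exact key L.length w hw L hL le_rfl hwμ

lemma parabolic_mono {I J : Set (Fin d)} (h : I ⊆ J) : parabolic a I ≤ parabolic a J :=
  Subgroup.closure_mono fun g hg => by
    obtain ⟨k, hk, hr⟩ := hg
    exact ⟨k, h hk, hr⟩

end Chamber
section Endgame

variable {V : Type*} [NormedAddCommGroup V] [InnerProductSpace ℝ V]
variable {Φ : Set V} {d : ℕ} {a lam : Fin d → V}

lemma lam_inj (hΦ : IsRootSystem Φ) (ha : IsSimpleSystem Φ a)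
    (hlam : ∀ i j, ⟪lam i, coroot (a j)⟫ = if i = j then (1 : ℝ) else 0)
    {m m' : Fin d} (h : lam m = lam m') : m = m' := by
  by_contra hne
  have h1 := lam_inner hΦ ha hlam m m
  have h2 := lam_inner hΦ ha hlam m' m
  rw [if_pos rfl] at h1
  rw [if_neg (Ne.symm hne)] at h2
  rw [h, h2] at h1
  have := apos hΦ ha m
  linarith

lemma reflFormula_lam_self (hΦ : IsRootSystem Φ) (ha : IsSimpleSystem Φ a)
    (hlam : ∀ i j, ⟪lam i, coroot (a j)⟫ = if i = j then (1 : ℝ) else 0) (i : Fin d) :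
    reflFormula (a i) (lam i) = lam i - a i := by
  rw [reflFormula_eq, lam_inner hΦ ha hlam i i, if_pos rfl]
  have h := (apos hΦ ha i).ne'
  rw [show 2 * ((⟪a i, a i⟫:ℝ) / 2) / ⟪a i, a i⟫ = 1 by field_simp, one_smul]

lemma reflFormula_lam_ne (hΦ : IsRootSystem Φ) (ha : IsSimpleSystem Φ a)
    (hlam : ∀ i j, ⟪lam i, coroot (a j)⟫ = if i = j then (1 : ℝ) else 0)
    {k m : Fin d} (h : m ≠ k) : reflFormula (a k) (lam m) = lam m := by
  rw [reflFormula_eq, lam_inner hΦ ha hlam m k, if_neg h]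
  simp

lemma lam_sub_ne (hΦ : IsRootSystem Φ) (ha : IsSimpleSystem Φ a)
    (hlam : ∀ i j, ⟪lam i, coroot (a j)⟫ = if i = j then (1 : ℝ) else 0)
    (i j : Fin d) : lam i - a i ≠ lam j := by
  intro h
  have h1 : (⟪lam i - a i, a i⟫ : ℝ) = ⟪lam i, a i⟫ - ⟪a i, a i⟫ := by
    rw [inner_sub_left]
  rw [lam_inner hΦ ha hlam i i, if_pos rfl] at h1
  have h2 : (⟪lam j, a i⟫ : ℝ) = if j = i then ⟪a i, a i⟫ / 2 else 0 :=
    lam_inner hΦ ha hlam j i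
  rw [h, h2] at h1
  have := apos hΦ ha i
  split at h1 <;> linarith

lemma lam_ne_sub (hΦ : IsRootSystem Φ) (ha : IsSimpleSystem Φ a)
    (hlam : ∀ i j, ⟪lam i, coroot (a j)⟫ = if i = j then (1 : ℝ) else 0)
    (i j : Fin d) : lam j ≠ lam i - a i :=
  fun h => lam_sub_ne hΦ ha hlam i j h.symm

lemma cartan_neg (hΦ : IsRootSystem Φ) (ha : IsSimpleSystem Φ a)
    (hlam : ∀ i j, ⟪lam i, coroot (a j)⟫ = if i = j then (1 : ℝ) else 0)
    {i j : Fin d} (hj : j ∈ Nset a i) : cartan a j i < 0 := by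
  rw [Nset, Finset.mem_filter] at hj
  obtain ⟨-, hji, hinner⟩ := hj
  have hobt : (⟪a i, a j⟫ : ℝ) ≤ 0 := obtuse hΦ ha hlam (Ne.symm hji)
  have hlt : (⟪a j, a i⟫ : ℝ) < 0 := by
    rw [real_inner_comm]
    exact lt_of_le_of_ne hobt hinner
  rw [cartan, coroot, real_inner_smul_left]
  have := apos hΦ ha j
  have h2 : (0:ℝ) < 2 / ⟪a j, a j⟫ := by positivity
  exact mul_neg_of_pos_of_neg h2 hlt

lemma lam_dominant (hΦ : IsRootSystem Φ) (ha : IsSimpleSystem Φ a)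
    (hlam : ∀ i j, ⟪lam i, coroot (a j)⟫ = if i = j then (1 : ℝ) else 0)
    (m k : Fin d) : (0:ℝ) ≤ ⟪lam m, a k⟫ := by
  rw [lam_inner hΦ ha hlam m k]
  split
  · linarith [apos hΦ ha k]
  · exact le_refl 0

open Classical in
/-- The indicator function of a point. -/
noncomputable def indic (x : V) : V → ℝ := fun y => if y = x then 1 else 0

lemma indic_self (x : V) : indic x x = 1 := by
  unfold indic
  exact if_pos rfl

lemma indic_ne {x y : V} (h : y ≠ x) : indic x y = 0 := by
  unfold indic
  exact if_neg h

lemma Lfun_expand (hΦ : IsRootSystem Φ) (ha : IsSimpleSystem Φ a)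
    (hlam : ∀ i j, ⟪lam i, coroot (a j)⟫ = if i = j then (1 : ℝ) else 0)
    (w : V ≃ₗ[ℝ] V) (i : Fin d) (h : V → ℝ) :
    Lfun a lam w i h = h (w (lam i)) + h (w (lam i - a i)) -
      ∑ j ∈ Nset a i, (-(cartan a j i)) * h (w (lam j)) := by
  rw [Lfun, reflFormula_lam_self hΦ ha hlam]

lemma Nset_ne (hj : j ∈ Nset a i) : j ≠ i := by
  rw [Nset, Finset.mem_filter] at hj
  exact hj.2.1

lemma Lfun_indic_fst (hΦ : IsRootSystem Φ) (ha : IsSimpleSystem Φ a)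
    (hlam : ∀ i j, ⟪lam i, coroot (a j)⟫ = if i = j then (1 : ℝ) else 0)
    (w : V ≃ₗ[ℝ] V) (i : Fin d) :
    Lfun a lam w i (indic (w (lam i))) = 1 := by
  rw [Lfun_expand hΦ ha hlam]
  have h1 : indic (w (lam i)) (w (lam i)) = 1 := indic_self _
  have h2 : indic (w (lam i)) (w (lam i - a i)) = 0 := by
    apply indic_ne
    intro h
    exact lam_sub_ne hΦ ha hlam i i (w.injective h)
  have h3 : ∑ j ∈ Nset a i, (-(cartan a j i)) * indic (w (lam i)) (w (lam j)) = 0 := by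
    apply Finset.sum_eq_zero
    intro j hj
    have : indic (w (lam i)) (w (lam j)) = 0 := by
      apply indic_ne
      intro h
      exact Nset_ne hj (lam_inj hΦ ha hlam (w.injective h))
    rw [this, mul_zero]
  rw [h1, h2, h3]
  norm_num

lemma Lfun_indic_snd (hΦ : IsRootSystem Φ) (ha : IsSimpleSystem Φ a)
    (hlam : ∀ i j, ⟪lam i, coroot (a j)⟫ = if i = j then (1 : ℝ) else 0)
    (w : V ≃ₗ[ℝ] V) (i : Fin d) :
    Lfun a lam w i (indic (w (lam i - a i))) = 1 := by
  rw [Lfun_expand hΦ ha hlam]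
  have h1 : indic (w (lam i - a i)) (w (lam i)) = 0 := by
    apply indic_ne
    intro h
    exact lam_ne_sub hΦ ha hlam i i (w.injective h)
  have h2 : indic (w (lam i - a i)) (w (lam i - a i)) = 1 := indic_self _
  have h3 : ∑ j ∈ Nset a i, (-(cartan a j i)) * indic (w (lam i - a i)) (w (lam j)) = 0 := by
    apply Finset.sum_eq_zero
    intro j hj
    have : indic (w (lam i - a i)) (w (lam j)) = 0 := by
      apply indic_ne
      intro h
      exact lam_ne_sub hΦ ha hlam i j (w.injective h)
    rw [this, mul_zero]
  rw [h1, h2, h3]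
  norm_num

lemma Lfun_indic_nbr (hΦ : IsRootSystem Φ) (ha : IsSimpleSystem Φ a)
    (hlam : ∀ i j, ⟪lam i, coroot (a j)⟫ = if i = j then (1 : ℝ) else 0)
    (w : V ≃ₗ[ℝ] V) (i : Fin d) {j₀ : Fin d} (hj₀ : j₀ ∈ Nset a i) :
    Lfun a lam w i (indic (w (lam j₀))) = cartan a j₀ i := by
  rw [Lfun_expand hΦ ha hlam]
  have h1 : indic (w (lam j₀)) (w (lam i)) = 0 := by
    apply indic_ne
    intro h
    exact Nset_ne hj₀ ((lam_inj hΦ ha hlam (w.injective h)).symm)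
  have h2 : indic (w (lam j₀)) (w (lam i - a i)) = 0 := by
    apply indic_ne
    intro h
    exact lam_sub_ne hΦ ha hlam i j₀ (w.injective h)
  have h3 : ∑ j ∈ Nset a i, (-(cartan a j i)) * indic (w (lam j₀)) (w (lam j)) =
      -(cartan a j₀ i) := by
    rw [Finset.sum_eq_single j₀]
    · rw [indic_self, mul_one]
    · intro j hj hne
      have : indic (w (lam j₀)) (w (lam j)) = 0 := by
        apply indic_ne
        intro h
        exact hne (lam_inj hΦ ha hlam (w.injective h))
      rw [this, mul_zero]
    · intro h; exact absurd hj₀ h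
  rw [h1, h2, h3]
  ring

lemma Lfun_indic_zero (hΦ : IsRootSystem Φ) (ha : IsSimpleSystem Φ a)
    (hlam : ∀ i j, ⟪lam i, coroot (a j)⟫ = if i = j then (1 : ℝ) else 0)
    (w : V ≃ₗ[ℝ] V) (i : Fin d) {x : V} (hx1 : x ≠ w (lam i)) (hx2 : x ≠ w (lam i - a i))
    (hx3 : ∀ j ∈ Nset a i, x ≠ w (lam j)) :
    Lfun a lam w i (indic x) = 0 := by
  rw [Lfun_expand hΦ ha hlam]
  rw [indic_ne (Ne.symm hx1), indic_ne (Ne.symm hx2)]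
  rw [Finset.sum_eq_zero fun j hj => by
    rw [indic_ne (Ne.symm (hx3 j hj)), mul_zero]]
  norm_num

lemma Lfun_indic_pos (hΦ : IsRootSystem Φ) (ha : IsSimpleSystem Φ a)
    (hlam : ∀ i j, ⟪lam i, coroot (a j)⟫ = if i = j then (1 : ℝ) else 0)
    (w : V ≃ₗ[ℝ] V) (i : Fin d) {x : V} (hx : 0 < Lfun a lam w i (indic x)) :
    x = w (lam i) ∨ x = w (lam i - a i) := by
  by_contra h
  push_neg at h
  obtain ⟨h1, h2⟩ := h
  by_cases h3 : ∃ j ∈ Nset a i, x = w (lam j)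
  · obtain ⟨j, hj, rfl⟩ := h3
    rw [Lfun_indic_nbr hΦ ha hlam w i hj] at hx
    exact absurd hx (not_lt.mpr (cartan_neg hΦ ha hlam hj).le)
  · push_neg at h3
    rw [Lfun_indic_zero hΦ ha hlam w i h1 h2 h3] at hx
    exact lt_irrefl 0 hx

lemma Lfun_indic_neg (hΦ : IsRootSystem Φ) (ha : IsSimpleSystem Φ a)
    (hlam : ∀ i j, ⟪lam i, coroot (a j)⟫ = if i = j then (1 : ℝ) else 0)
    (w : V ≃ₗ[ℝ] V) (i : Fin d) {x : V} (hx : Lfun a lam w i (indic x) < 0) :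
    ∃ j ∈ Nset a i, x = w (lam j) := by
  by_contra h3
  push_neg at h3
  rcases eq_or_ne x (w (lam i)) with rfl | h1
  · rw [Lfun_indic_fst hΦ ha hlam] at hx; linarith
  rcases eq_or_ne x (w (lam i - a i)) with rfl | h2
  · rw [Lfun_indic_snd hΦ ha hlam] at hx; linarith
  rw [Lfun_indic_zero hΦ ha hlam w i h1 h2 h3] at hx
  exact lt_irrefl 0 hx

end Endgame
section Final

variable {V : Type*} [NormedAddCommGroup V] [InnerProductSpace ℝ V]
variable {Φ : Set V} {d : ℕ} {a lam : Fin d → V}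

lemma reflFormula_fix {α x : V} (h : (⟪x, α⟫ : ℝ) = 0) : reflFormula α x = x := by
  rw [reflFormula_eq, h, mul_zero, zero_div, zero_smul, sub_zero]

lemma reflFormula_lam_sub (hΦ : IsRootSystem Φ) (ha : IsSimpleSystem Φ a)
    (hlam : ∀ i j, ⟪lam i, coroot (a j)⟫ = if i = j then (1 : ℝ) else 0) (i : Fin d) :
    reflFormula (a i) (lam i - a i) = lam i := by
  have hc := (apos hΦ ha i).ne'
  rw [reflFormula_eq, inner_sub_left, lam_inner hΦ ha hlam i i, if_pos rfl]
  rw [show 2 * ((⟪a i, a i⟫:ℝ) / 2 - ⟪a i, a i⟫) / ⟪a i, a i⟫ = -1 by field_simp; ring]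
  rw [neg_one_smul, sub_neg_eq_add]
  abel

lemma not_mem_Nset_self (i : Fin d) : i ∉ Nset a i := by
  rw [Nset, Finset.mem_filter]
  intro h
  exact h.2.1 rfl

lemma perp_of_not_mem_Nset {i k : Fin d} (hk : k ∉ Nset a i) (hki : k ≠ i) :
    (⟪a i, a k⟫ : ℝ) = 0 := by
  by_contra h
  exact hk (by rw [Nset, Finset.mem_filter]; exact ⟨Finset.mem_univ k, hki, h⟩)

/-- An element fixes each neighbouring fundamental weight and preserves the pair
`{λ_i, λ_i - α_i}`. -/
def PairFix (a lam : Fin d → V) (i : Fin d) (u : V ≃ₗ[ℝ] V) : Prop :=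
  (∀ j ∈ Nset a i, u (lam j) = lam j) ∧
  ((u (lam i) = lam i ∧ u (lam i - a i) = lam i - a i) ∨
   (u (lam i) = lam i - a i ∧ u (lam i - a i) = lam i))

lemma pairFix_of_parabolic (hΦ : IsRootSystem Φ) (ha : IsSimpleSystem Φ a)
    (hlam : ∀ i j, ⟪lam i, coroot (a j)⟫ = if i = j then (1 : ℝ) else 0) (i : Fin d)
    {u : V ≃ₗ[ℝ] V} (hu : u ∈ parabolic a {k | k ∉ Nset a i}) : PairFix a lam i u := by
  induction hu using Subgroup.closure_induction with
  | mem g hg =>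
    obtain ⟨k, hk, hrefl⟩ := hg
    have hk' : k ∉ Nset a i := hk
    constructor
    · intro j hj
      rw [hrefl]
      apply reflFormula_lam_ne hΦ ha hlam
      intro hjk
      exact hk' (hjk ▸ hj)
    · rcases eq_or_ne k i with rfl | hki
      · right
        exact ⟨by rw [hrefl]; exact reflFormula_lam_self hΦ ha hlam k,
          by rw [hrefl]; exact reflFormula_lam_sub hΦ ha hlam k⟩
      · left
        have hperp : (⟪a i, a k⟫ : ℝ) = 0 := perp_of_not_mem_Nset hk' hki
        have hfix1 : g (lam i) = lam i := by
          rw [hrefl]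
          exact reflFormula_lam_ne hΦ ha hlam (Ne.symm hki)
        refine ⟨hfix1, ?_⟩
        rw [hrefl]
        apply reflFormula_fix
        rw [inner_sub_left, lam_inner hΦ ha hlam i k, if_neg (Ne.symm hki), hperp]
        ring
  | one =>
    exact ⟨fun j _ => rfl, Or.inl ⟨rfl, rfl⟩⟩
  | mul x y _ _ hx hy =>
    obtain ⟨hx1, hx2⟩ := hx
    obtain ⟨hy1, hy2⟩ := hy
    refine ⟨fun j hj => by rw [mul_apply', hy1 j hj, hx1 j hj], ?_⟩
    rcases hy2 with ⟨hy21, hy22⟩ | ⟨hy21, hy22⟩ <;> rcases hx2 with ⟨hx21, hx22⟩ | ⟨hx21, hx22⟩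
    · exact Or.inl ⟨by rw [mul_apply', hy21, hx21], by rw [mul_apply', hy22, hx22]⟩
    · exact Or.inr ⟨by rw [mul_apply', hy21, hx21], by rw [mul_apply', hy22, hx22]⟩
    · exact Or.inr ⟨by rw [mul_apply', hy21, hx22], by rw [mul_apply', hy22, hx21]⟩
    · exact Or.inl ⟨by rw [mul_apply', hy21, hx22], by rw [mul_apply', hy22, hx21]⟩
  | inv x _ hx =>
    obtain ⟨hx1, hx2⟩ := hx
    have inv_of : ∀ p q : V, x p = q → x⁻¹ q = p := by
      intro p q hpq
      rw [← hpq, inv_apply', LinearEquiv.symm_apply_apply]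
    refine ⟨fun j hj => inv_of _ _ (hx1 j hj), ?_⟩
    rcases hx2 with ⟨h1, h2⟩ | ⟨h1, h2⟩
    · exact Or.inl ⟨inv_of _ _ h1, inv_of _ _ h2⟩
    · exact Or.inr ⟨inv_of _ _ h2, inv_of _ _ h1⟩

lemma Lfun_right_invariant (hΦ : IsRootSystem Φ) (ha : IsSimpleSystem Φ a)
    (hlam : ∀ i j, ⟪lam i, coroot (a j)⟫ = if i = j then (1 : ℝ) else 0)
    (w : V ≃ₗ[ℝ] V) (i : Fin d) {u : V ≃ₗ[ℝ] V}
    (hu : u ∈ parabolic a {k | k ∉ Nset a i}) (g : V → ℝ) :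
    Lfun a lam w i g = Lfun a lam (w * u) i g := by
  obtain ⟨hfix, hpair⟩ := pairFix_of_parabolic hΦ ha hlam i hu
  rw [Lfun_expand hΦ ha hlam, Lfun_expand hΦ ha hlam]
  have hsum : ∑ j ∈ Nset a i, (-(cartan a j i)) * g ((w * u) (lam j)) =
      ∑ j ∈ Nset a i, (-(cartan a j i)) * g (w (lam j)) :=
    Finset.sum_congr rfl fun j hj => by rw [mul_apply', hfix j hj]
  rcases hpair with ⟨h1, h2⟩ | ⟨h1, h2⟩
  · rw [hsum, mul_apply', mul_apply', h1, h2]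
  · rw [hsum, mul_apply', mul_apply', h1, h2]
    ring

end Final
/-- **Theorem 7.2 (identification of inequalities)**: `L_{w,i} = L_{w',i'}` as linear functionals
on `ℝ^R` if and only if `i = i'` and `w⁻¹w' ∈ W_{[d]∖N(i)}`. -/
theorem Lfun_eq_iff_parabolic
    {V : Type*} [NormedAddCommGroup V] [InnerProductSpace ℝ V] [FiniteDimensional ℝ V]
    {Φ : Set V} (hΦ : IsRootSystem Φ) {d : ℕ} {a : Fin d → V} (ha : IsSimpleSystem Φ a)
    {lam : Fin d → V} (hlam : ∀ i j, ⟪lam i, coroot (a j)⟫ = if i = j then (1 : ℝ) else 0)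
    (w w' : V ≃ₗ[ℝ] V) (hw : w ∈ weylGroup Φ) (hw' : w' ∈ weylGroup Φ) (i i' : Fin d) :
    (∀ g : V → ℝ, Lfun a lam w i g = Lfun a lam w' i' g) ↔
      (i = i' ∧ w⁻¹ * w' ∈ parabolic a {k | k ∉ Nset a i}) := by
  classical
  constructor
  · intro h
    have h1 : Lfun a lam w i (indic (w' (lam i'))) = 1 := by
      rw [h]; exact Lfun_indic_fst hΦ ha hlam w' i'
    have hp1 : w' (lam i') = w (lam i) ∨ w' (lam i') = w (lam i - a i) :=
      Lfun_indic_pos hΦ ha hlam w i (by rw [h1]; norm_num)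
    -- step 1 : i = i'
    have hii : i = i' := by
      rcases hp1 with hcase | hcase
      · have hv : (w'⁻¹ * w) ∈ weylGroup Φ := mul_mem (inv_mem hw') hw
        have happ : (w'⁻¹ * w) (lam i) = lam i' := by
          rw [mul_apply', ← hcase, inv_apply', LinearEquiv.symm_apply_apply]
        obtain ⟨heq, -⟩ := chamber hΦ ha hlam (fun k => lam_dominant hΦ ha hlam i k)
          (fun k => lam_dominant hΦ ha hlam i' k) hv happ
        exact lam_inj hΦ ha hlam heq
      · have hv : (w'⁻¹ * (w * sr (a i))) ∈ weylGroup Φ :=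
          mul_mem (inv_mem hw') (mul_mem hw (sr_mem_weyl hΦ (ha.mem i)))
        have happ : (w'⁻¹ * (w * sr (a i))) (lam i) = lam i' := by
          rw [mul_apply', mul_apply', sr_apply, reflFormula_lam_self hΦ ha hlam, ← hcase,
            inv_apply', LinearEquiv.symm_apply_apply]
        obtain ⟨heq, -⟩ := chamber hΦ ha hlam (fun k => lam_dominant hΦ ha hlam i k)
          (fun k => lam_dominant hΦ ha hlam i' k) hv happ
        exact lam_inj hΦ ha hlam heq
      
    subst hii
    refine ⟨rfl, ?_⟩
    set u : V ≃ₗ[ℝ] V := w⁻¹ * w' with hudef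
    have huW : u ∈ weylGroup Φ := mul_mem (inv_mem hw) hw'
    have hinvw : ∀ p q : V, w' p = w q → u p = q := by
      intro p q hpq
      rw [hudef, mul_apply', hpq, inv_apply', LinearEquiv.symm_apply_apply]
    -- pair facts
    have h2 : Lfun a lam w i (indic (w' (lam i - a i))) = 1 := by
      rw [h]; exact Lfun_indic_snd hΦ ha hlam w' i
    have hp2 : w' (lam i - a i) = w (lam i) ∨ w' (lam i - a i) = w (lam i - a i) :=
      Lfun_indic_pos hΦ ha hlam w i (by rw [h2]; norm_num)
    have key1 : u (lam i) = lam i ∨ u (lam i) = lam i - a i := by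
      rcases hp1 with hc | hc
      · exact Or.inl (hinvw _ _ hc)
      · exact Or.inr (hinvw _ _ hc)
    have key2 : u (lam i - a i) = lam i ∨ u (lam i - a i) = lam i - a i := by
      rcases hp2 with hc | hc
      · exact Or.inl (hinvw _ _ hc)
      · exact Or.inr (hinvw _ _ hc)
    have hne : u (lam i) ≠ u (lam i - a i) := by
      intro hc
      exact lam_sub_ne hΦ ha hlam i i (u.injective hc).symm
    have hpairsum : u (lam i) + u (lam i - a i) = lam i + (lam i - a i) := by
      rcases key1 with k1 | k1 <;> rcases key2 with k2 | k2
      · exact absurd (k1.trans k2.symm) hne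
      · rw [k1, k2]
      · rw [k1, k2]; abel
      · exact absurd (k1.trans k2.symm) hne
    -- neighbours
    have hnbr : ∀ j' ∈ Nset a i, ∃ j ∈ Nset a i, u (lam j') = lam j := by
      intro j' hj'
      have h3 : Lfun a lam w i (indic (w' (lam j'))) = cartan a j' i := by
        rw [h]; exact Lfun_indic_nbr hΦ ha hlam w' i hj'
      have hlt : Lfun a lam w i (indic (w' (lam j'))) < 0 := by
        rw [h3]; exact cartan_neg hΦ ha hlam hj'
      obtain ⟨j, hj, heq⟩ := Lfun_indic_neg hΦ ha hlam w i hlt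
      exact ⟨j, hj, hinvw _ _ heq⟩
    -- the induced injective self-map of `Nset a i`
    set F : Fin d → Fin d := fun j' =>
      if hj' : j' ∈ Nset a i then Classical.choose (hnbr j' hj') else j' with hF
    have hFmem : ∀ j' ∈ Nset a i, F j' ∈ Nset a i := by
      intro j' hj'
      rw [hF]
      simp only [dif_pos hj']
      exact (Classical.choose_spec (hnbr j' hj')).1
    have hFval : ∀ j' ∈ Nset a i, u (lam j') = lam (F j') := by
      intro j' hj'
      rw [hF]
      simp only [dif_pos hj']
      exact (Classical.choose_spec (hnbr j' hj')).2
    have hFinj : ∀ j₁ ∈ Nset a i, ∀ j₂ ∈ Nset a i, F j₁ = F j₂ → j₁ = j₂ := by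
      intro j₁ h₁ j₂ h₂ he
      have : u (lam j₁) = u (lam j₂) := by
        rw [hFval j₁ h₁, hFval j₂ h₂, he]
      exact lam_inj hΦ ha hlam (u.injective this)
    have himg : (Nset a i).image F = Nset a i := by
      apply Finset.eq_of_subset_of_card_le
      · intro j hj
        obtain ⟨j', hj', rfl⟩ := Finset.mem_image.mp hj
        exact hFmem j' hj'
      · rw [Finset.card_image_of_injOn hFinj]
    have hsumN : u (∑ j ∈ Nset a i, lam j) = ∑ j ∈ Nset a i, lam j := by
      rw [map_sum]
      calc ∑ j' ∈ Nset a i, u (lam j') = ∑ j' ∈ Nset a i, lam (F j') :=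
            Finset.sum_congr rfl hFval
        _ = ∑ j ∈ (Nset a i).image F, lam j := (Finset.sum_image hFinj).symm
        _ = ∑ j ∈ Nset a i, lam j := by rw [himg]
    -- the fixed dominant vector
    set μ : V := (lam i + (lam i - a i)) + ∑ j ∈ Nset a i, lam j with hμdef
    have hufix : u μ = μ := by
      rw [hμdef, map_add, map_add, hsumN, hpairsum]
    have hinnerμ : ∀ k, (⟪μ, a k⟫ : ℝ) =
        if k = i then 0 else
          if k ∈ Nset a i then ⟪a k, a k⟫ / 2 - ⟪a i, a k⟫ else 0 := by
      intro k
      have hsum : (⟪∑ j ∈ Nset a i, lam j, a k⟫ : ℝ) =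
          if k ∈ Nset a i then ⟪a k, a k⟫ / 2 else 0 := by
        rw [sum_inner]
        rw [show ∑ j ∈ Nset a i, (⟪lam j, a k⟫ : ℝ) =
            ∑ j ∈ Nset a i, if j = k then ⟪a k, a k⟫ / 2 else 0 from
          Finset.sum_congr rfl fun j _ => lam_inner hΦ ha hlam j k]
        rw [Finset.sum_ite_eq' (Nset a i) k fun _ => (⟪a k, a k⟫ : ℝ) / 2]
      rw [hμdef, inner_add_left, inner_add_left, inner_sub_left,
        lam_inner hΦ ha hlam i k, hsum]
      rcases eq_or_ne k i with rfl | hki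
      · rw [if_pos rfl, if_pos rfl, if_neg (not_mem_Nset_self k)]
        ring
      · rw [if_neg (Ne.symm hki), if_neg hki]
        by_cases hkN : k ∈ Nset a i
        · rw [if_pos hkN, if_pos hkN]
          ring
        · rw [if_neg hkN, if_neg hkN, perp_of_not_mem_Nset hkN hki]
          ring
    have hdom : ∀ k, (0:ℝ) ≤ ⟪μ, a k⟫ := by
      intro k
      rw [hinnerμ k]
      rcases eq_or_ne k i with rfl | hki
      · rw [if_pos rfl]
      · rw [if_neg hki]
        by_cases hkN : k ∈ Nset a i
        · rw [if_pos hkN]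
          have h1 := apos hΦ ha k
          have h2 : (⟪a i, a k⟫ : ℝ) ≤ 0 := obtuse hΦ ha hlam (Ne.symm hki)
          linarith
        · rw [if_neg hkN]
    obtain ⟨-, hpar⟩ := chamber hΦ ha hlam hdom hdom huW hufix
    refine parabolic_mono ?_ hpar
    intro k hk
    simp only [Set.mem_setOf_eq] at hk ⊢
    intro hkN
    have hki : k ≠ i := Nset_ne hkN
    rw [hinnerμ k, if_neg hki, if_pos hkN] at hk
    have h1 := apos hΦ ha k
    have h2 : (⟪a i, a k⟫ : ℝ) ≤ 0 := obtuse hΦ ha hlam (Ne.symm hki)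
    linarith
  · rintro ⟨rfl, hu⟩
    intro g
    have hw'eq : w' = w * (w⁻¹ * w') := by
      rw [← mul_assoc, mul_inv_cancel, one_mul]
    rw [Lfun_right_invariant hΦ ha hlam w i hu g, ← hw'eq]
end

section
/- (From the proof of Theorem 7.2: stabilizer of a wall-crossing inequality) For each 1 ≤ i ≤ d, the set {w ∈ W : {wλ_i, w s_i λ_i} = {λ_i, s_i λ_i} as unordered pairs} equals the parabolic subgroup W_{[d]∖N(i)} of W generated by {s_k : k ∉ N(i)}. Consequently, the W-orbit of the unordered pair {λ_i, s_i λ_i} has exactly |W| / |W_{[d]∖N(i)}| elements. -/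
open scoped RealInnerProductSpace Pointwise

namespace WallPair
variable {V : Type*} [NormedAddCommGroup V] [InnerProductSpace ℝ V]


lemma reflFormula_invol (α x : V) : reflFormula α (reflFormula α x) = x := by
  by_cases h : α = 0
  · simp [reflFormula, h]
  · have hQ : ⟪α,α⟫ ≠ 0 := fun hc => h ((inner_self_eq_zero (𝕜 := ℝ)).mp hc)
    simp only [reflFormula, inner_sub_left, inner_smul_left, RCLike.star_def, conj_trivial]
    rw [sub_sub, ← add_smul]
    have : (2*⟪x,α⟫)/⟪α,α⟫ + (2*(⟪x,α⟫ - (2*⟪x,α⟫)/⟪α,α⟫*⟪α,α⟫))/⟪α,α⟫ = 0 := by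
      field_simp
      ring
    rw [this, zero_smul, sub_zero]

lemma inner_reflFormula (α x y : V) : ⟪reflFormula α x, reflFormula α y⟫ = ⟪x, y⟫ := by
  by_cases h : α = 0
  · simp [reflFormula, h]
  · have hQ : ⟪α,α⟫ ≠ 0 := fun hc => h ((inner_self_eq_zero (𝕜 := ℝ)).mp hc)
    simp only [reflFormula, inner_sub_left, inner_sub_right, inner_smul_left, inner_smul_right,
      RCLike.star_def, conj_trivial]
    rw [real_inner_comm y α]
    field_simp
    ring

lemma reflFormula_self {α : V} (h : α ≠ 0) : reflFormula α α = -α := by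
  have hQ : ⟪α,α⟫ ≠ 0 := fun hc => h ((inner_self_eq_zero (𝕜 := ℝ)).mp hc)
  rw [reflFormula, mul_div_assoc, div_self hQ, mul_one]
  module

noncomputable def sM (α : V) : V →ₗ[ℝ] V where
  toFun x := reflFormula α x
  map_add' x y := by
    simp only [reflFormula, inner_add_left]
    rw [show (2*(⟪x,α⟫+⟪y,α⟫))/⟪α,α⟫ = (2*⟪x,α⟫)/⟪α,α⟫ + (2*⟪y,α⟫)/⟪α,α⟫ by ring, add_smul]
    abel
  map_smul' c x := by
    simp only [reflFormula, inner_smul_left, RingHom.id_apply, smul_sub, smul_smul,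
      RCLike.star_def, conj_trivial]
    congr 1
    rw [show (2*(c*⟪x,α⟫))/⟪α,α⟫ = c * ((2*⟪x,α⟫)/⟪α,α⟫) by ring]

noncomputable def sE (α : V) : V ≃ₗ[ℝ] V :=
  LinearEquiv.ofInvolutive (sM α) (fun x => reflFormula_invol α x)

@[simp] lemma sE_apply (α x : V) : sE α x = reflFormula α x := rfl

lemma isReflection_sE (α : V) : IsReflection (sE α) α := fun _ => rfl

lemma IsReflection.eq_sE {g : V ≃ₗ[ℝ] V} {α : V} (h : IsReflection g α) : g = sE α :=
  LinearEquiv.toLinearMap_injective (LinearMap.ext fun x => h x)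

lemma sE_mul_self (α : V) : sE α * sE α = 1 := by
  apply LinearEquiv.toLinearMap_injective
  apply LinearMap.ext
  intro x
  show sE α (sE α x) = x
  simp [reflFormula_invol]

lemma sE_inv (α : V) : (sE α)⁻¹ = sE α := inv_eq_of_mul_eq_one_right (sE_mul_self α)

lemma sE_conj {u : V ≃ₗ[ℝ] V} (hu : ∀ x y, ⟪u x, u y⟫ = ⟪x, y⟫) (α : V) :
    sE (u α) = u * sE α * u⁻¹ := by
  apply LinearEquiv.toLinearMap_injective
  apply LinearMap.ext
  intro x
  show sE (u α) x = u (sE α (u⁻¹ x))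
  have huu : u (u⁻¹ x) = x := by
    show (u * u⁻¹) x = x
    rw [mul_inv_cancel]; rfl
  simp only [sE_apply, reflFormula, map_sub, map_smul]
  rw [huu, hu α α, ← hu (u⁻¹ x) α, huu]

section Weyl
variable {Φ : Set V}


lemma weyl_inner {w : V ≃ₗ[ℝ] V} (hw : w ∈ weylGroup Φ) (x y : V) : ⟪w x, w y⟫ = ⟪x, y⟫ := by
  induction hw using Subgroup.closure_induction generalizing x y with
  | mem g hg =>
    obtain ⟨α, _, hr⟩ := hg
    rw [hr x, hr y, inner_reflFormula]
  | one => rfl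
  | mul g h _ _ ih1 ih2 =>
    show ⟪g (h x), g (h y)⟫ = _
    rw [ih1, ih2]
  | inv g _ ih =>
    have h1 : g (g⁻¹ x) = x := by show (g * g⁻¹) x = x; rw [mul_inv_cancel]; rfl
    have h2 : g (g⁻¹ y) = y := by show (g * g⁻¹) y = y; rw [mul_inv_cancel]; rfl
    rw [← ih (g⁻¹ x) (g⁻¹ y), h1, h2]

lemma weyl_mem_root (hΦ : IsRootSystem Φ) {w : V ≃ₗ[ℝ] V} (hw : w ∈ weylGroup Φ)
    {β : V} (hβ : β ∈ Φ) : w β ∈ Φ := by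
  suffices h : ∀ γ ∈ Φ, w γ ∈ Φ ∧ w⁻¹ γ ∈ Φ from (h β hβ).1
  clear hβ
  induction hw using Subgroup.closure_induction with
  | mem g hg =>
    obtain ⟨α, hα, hr⟩ := hg
    intro γ hγ
    constructor
    · rw [hr γ, ← hΦ.refl_maps α hα]; exact ⟨γ, hγ, rfl⟩
    · rw [← hΦ.refl_maps α hα] at hγ
      obtain ⟨δ, hδ, rfl⟩ := hγ
      have : g δ = reflFormula α δ := hr δ
      have h2 : g⁻¹ (g δ) = δ := by show (g⁻¹ * g) δ = δ; rw [inv_mul_cancel]; rfl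
      rw [← this, h2]; exact hδ
  | one => exact fun γ hγ => ⟨hγ, hγ⟩
  | mul g h _ _ ih1 ih2 =>
    intro γ hγ
    constructor
    · exact (ih1 _ (ih2 γ hγ).1).1
    · show ((g*h)⁻¹) γ ∈ Φ
      rw [mul_inv_rev]
      exact (ih2 _ (ih1 γ hγ).2).2
  | inv g _ ih =>
    intro γ hγ
    refine ⟨(ih γ hγ).2, ?_⟩
    rw [inv_inv]
    exact (ih γ hγ).1

lemma weyl_finite (hΦ : IsRootSystem Φ) : Finite (weylGroup Φ) := by
  classical
  set F := hΦ.finite.toFinset with hF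
  have hmem : ∀ (w : weylGroup Φ) (β : F), (w : V ≃ₗ[ℝ] V) β ∈ F := by
    intro w β
    rw [hΦ.finite.mem_toFinset]
    exact weyl_mem_root hΦ w.2 (hΦ.finite.mem_toFinset.mp β.2)
  let f : weylGroup Φ → (F → F) := fun w β => ⟨(w : V ≃ₗ[ℝ] V) β, hmem w β⟩
  have hinj : Function.Injective f := by
    intro w w' h
    ext1
    apply LinearEquiv.toLinearMap_injective
    apply LinearMap.ext_on hΦ.spans
    intro x hx
    have := congrFun h ⟨x, hΦ.finite.mem_toFinset.mpr hx⟩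
    exact Subtype.ext_iff.mp this
  exact Finite.of_injective f hinj

end Weyl
section Simple
variable {Φ : Set V} {d : ℕ} {a : Fin d → V}

noncomputable def bas (ha : IsSimpleSystem Φ a) : Module.Basis (Fin d) ℝ V :=
  Module.Basis.mk ha.indep (by rw [ha.spans])

lemma bas_eq (ha : IsSimpleSystem Φ a) (j : Fin d) : bas ha j = a j := Module.Basis.mk_apply _ _ _

def Pos (ha : IsSimpleSystem Φ a) (x : V) : Prop := ∀ k, 0 ≤ (bas ha).repr x k

lemma repr_sum (ha : IsSimpleSystem Φ a) (c : Fin d → ℝ) (k : Fin d) :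
    (bas ha).repr (∑ j, c j • a j) k = c k := by
  have h1 : ∑ j, c j • a j = (bas ha).equivFun.symm c := by
    rw [Module.Basis.equivFun_symm_apply]
    exact Finset.sum_congr rfl fun j _ => by rw [bas_eq]
  rw [h1, ← Module.Basis.equivFun_apply, LinearEquiv.apply_symm_apply]

lemma repr_a (ha : IsSimpleSystem Φ a) (j k : Fin d) :
    (bas ha).repr (a j) k = if j = k then 1 else 0 := by
  rw [← bas_eq ha, Module.Basis.repr_self, Finsupp.single_apply]

lemma pos_total (ha : IsSimpleSystem Φ a) {β : V} (hβ : β ∈ Φ) :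
    Pos ha β ∨ Pos ha (-β) := by
  obtain ⟨c, hc, rfl⟩ := ha.sign β hβ
  rcases hc with hc | hc
  · exact Or.inl fun k => by rw [repr_sum]; exact hc k
  · refine Or.inr fun k => ?_
    have : -∑ j, c j • a j = ∑ j, (-c j) • a j := by
      rw [← Finset.sum_neg_distrib]
      exact Finset.sum_congr rfl fun j _ => (neg_smul _ _).symm
    rw [this, repr_sum]
    linarith [hc k]

lemma eq_zero_of_pos_neg (ha : IsSimpleSystem Φ a) {β : V} (h1 : Pos ha β)
    (h2 : Pos ha (-β)) : β = 0 := by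
  have h : ∀ k, (bas ha).repr β k = 0 := by
    intro k
    have := h2 k
    rw [map_neg, Finsupp.neg_apply] at this
    linarith [h1 k]
  have : (bas ha).repr β = 0 := Finsupp.ext h
  exact ((bas ha).repr.map_eq_zero_iff).mp this

lemma a_ne_zero (hΦ : IsRootSystem Φ) (ha : IsSimpleSystem Φ a) (j : Fin d) : a j ≠ 0 :=
  hΦ.ne_zero _ (ha.mem j)

lemma Q_pos (hΦ : IsRootSystem Φ) (ha : IsSimpleSystem Φ a) (j : Fin d) : 0 < ⟪a j, a j⟫ := by
  have := real_inner_self_eq_norm_sq (a j)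
  have h2 : (0:ℝ) < ‖a j‖ := norm_pos_iff.mpr (a_ne_zero hΦ ha j)
  nlinarith

lemma pos_a (ha : IsSimpleSystem Φ a) (j : Fin d) : Pos ha (a j) := by
  intro k
  rw [repr_a]
  split <;> norm_num

lemma inner_nonpos (hΦ : IsRootSystem Φ) (ha : IsSimpleSystem Φ a) {i j : Fin d}
    (hij : i ≠ j) : ⟪a i, a j⟫ ≤ 0 := by
  by_contra h
  push_neg at h
  set c : ℝ := (2*⟪a j, a i⟫)/⟪a i, a i⟫ with hcdef
  have hγΦ : reflFormula (a i) (a j) ∈ Φ := by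
    rw [← hΦ.refl_maps (a i) (ha.mem i)]
    exact ⟨a j, ha.mem j, rfl⟩
  have hγ : reflFormula (a i) (a j) = a j - c • a i := rfl
  have hc : 0 < c := div_pos (by rw [real_inner_comm]; linarith) (Q_pos hΦ ha i)
  have hri : (bas ha).repr (reflFormula (a i) (a j)) i = -c := by
    rw [hγ, map_sub, map_smul]
    simp only [Finsupp.sub_apply, Finsupp.smul_apply, repr_a, smul_eq_mul]
    norm_num [Ne.symm hij]
  have hrj : (bas ha).repr (reflFormula (a i) (a j)) j = 1 := by
    rw [hγ, map_sub, map_smul]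
    simp only [Finsupp.sub_apply, Finsupp.smul_apply, repr_a, smul_eq_mul]
    norm_num [hij]
  rcases pos_total ha hγΦ with hp | hp
  · have := hp i; rw [hri] at this; linarith
  · have := hp j
    rw [map_neg, Finsupp.neg_apply, hrj] at this
    linarith

lemma refl_pos (hΦ : IsRootSystem Φ) (ha : IsSimpleSystem Φ a) {β : V} (hβ : β ∈ Φ)
    (hp : Pos ha β) {i : Fin d} (hne : β ≠ a i) :
    reflFormula (a i) β ∈ Φ ∧ Pos ha (reflFormula (a i) β) := by
  have hmem : reflFormula (a i) β ∈ Φ := by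
    rw [← hΦ.refl_maps (a i) (ha.mem i)]
    exact ⟨β, hβ, rfl⟩
  refine ⟨hmem, ?_⟩
  obtain ⟨k, hk, hkpos⟩ : ∃ k, k ≠ i ∧ 0 < (bas ha).repr β k := by
    by_contra h
    push_neg at h
    have hβeq : β = ((bas ha).repr β i) • a i := by
      conv_lhs => rw [← Module.Basis.sum_repr (bas ha) β]
      rw [Finset.sum_eq_single i]
      · rw [bas_eq]
      · intro k _ hki
        have h0 : (bas ha).repr β k = 0 := le_antisymm (h k hki) (hp k)
        rw [h0, zero_smul]
      · intro hi; exact absurd (Finset.mem_univ i) hi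
    have := hΦ.smul_mem (a i) (ha.mem i) ((bas ha).repr β i) (hβeq ▸ hβ)
    rcases this with h1 | h1
    · rw [h1, one_smul] at hβeq; exact hne hβeq
    · have := hp i; rw [h1] at this; linarith
  have hrk : (bas ha).repr (reflFormula (a i) β) k = (bas ha).repr β k := by
    show (bas ha).repr (β - _ • a i) k = _
    rw [map_sub, map_smul]
    simp only [Finsupp.sub_apply, Finsupp.smul_apply, repr_a, smul_eq_mul]
    norm_num [Ne.symm hk]
  rcases pos_total ha hmem with hq | hq
  · exact hq
  · exfalso
    have := hq k
    rw [map_neg, Finsupp.neg_apply, hrk] at this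
    linarith

noncomputable def prodS (a : Fin d → V) (l : List (Fin d)) : V ≃ₗ[ℝ] V :=
  (l.map fun j => sE (a j)).prod

lemma prodS_nil : prodS a [] = 1 := rfl

lemma prodS_cons (j : Fin d) (l : List (Fin d)) :
    prodS a (j :: l) = sE (a j) * prodS a l := by
  rw [prodS, List.map_cons, List.prod_cons]; rfl

lemma prodS_singleton (j : Fin d) : prodS a [j] = sE (a j) := by
  rw [prodS]; simp

lemma prodS_concat (l : List (Fin d)) (j : Fin d) :
    prodS a (l ++ [j]) = prodS a l * sE (a j) := by
  rw [prodS, List.map_append, List.prod_append]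
  simp [prodS]

lemma prodS_append (l l' : List (Fin d)) :
    prodS a (l ++ l') = prodS a l * prodS a l' := by
  rw [prodS, List.map_append, List.prod_append]; rfl

lemma prodS_mem (ha : IsSimpleSystem Φ a) (l : List (Fin d)) : prodS a l ∈ weylGroup Φ := by
  induction l with
  | nil => exact (weylGroup Φ).one_mem
  | cons j l ih =>
    rw [prodS_cons]
    exact mul_mem (Subgroup.subset_closure ⟨a j, ha.mem j, isReflection_sE (a j)⟩) ih

lemma prodS_inv (l : List (Fin d)) : (prodS a l)⁻¹ = prodS a l.reverse := by
  induction l with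
  | nil => simp [prodS_nil]
  | cons j l ih =>
    rw [prodS_cons, mul_inv_rev, ih, sE_inv, List.reverse_cons, prodS_concat]

lemma root_eq_word (hΦ : IsRootSystem Φ) (ha : IsSimpleSystem Φ a) {β : V} (hβ : β ∈ Φ) :
    ∃ l : List (Fin d), ∃ j, β = prodS a l (a j) := by
  have hposcase : ∀ γ ∈ Φ, Pos ha γ → ∃ l : List (Fin d), ∃ j, γ = prodS a l (a j) := by
    by_contra hcon
    push_neg at hcon
    obtain ⟨γ₀, hγ₀Φ, hγ₀p, hγ₀w⟩ := hcon
    set S : Set V := {γ | γ ∈ Φ ∧ Pos ha γ ∧ ¬∃ l : List (Fin d), ∃ j, γ = prodS a l (a j)}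
      with hS
    have hSfin : S.Finite := hΦ.finite.subset fun γ hγ => hγ.1
    have hSne : S.Nonempty := ⟨γ₀, hγ₀Φ, hγ₀p, by push_neg; exact hγ₀w⟩
    obtain ⟨β, hβS, hβmin⟩ := Set.exists_min_image S
      (fun γ => ∑ k, (bas ha).repr γ k) hSfin hSne
    obtain ⟨hβΦ, hβp, hβw⟩ := hβS
    have hβns : ∀ j, β ≠ a j := by
      intro j hj
      exact hβw ⟨[], j, by rw [prodS_nil]; exact hj⟩
    obtain ⟨j, hj⟩ : ∃ j, 0 < ⟪β, a j⟫ := by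
      by_contra h
      push_neg at h
      have hQβ : 0 < ⟪β, β⟫ := by
        have := real_inner_self_eq_norm_sq β
        have h2 : (0:ℝ) < ‖β‖ := norm_pos_iff.mpr (hΦ.ne_zero β hβΦ)
        nlinarith
      have hexp : β = ∑ k, (bas ha).repr β k • a k := by
        conv_lhs => rw [← Module.Basis.sum_repr (bas ha) β]
        exact Finset.sum_congr rfl fun k _ => by rw [bas_eq]
      have : ⟪β, β⟫ = ∑ k, (bas ha).repr β k * ⟪a k, β⟫ := by
        nth_rewrite 1 [hexp]
        rw [sum_inner]
        exact Finset.sum_congr rfl fun k _ => real_inner_smul_left _ _ _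
      have hle : ⟪β, β⟫ ≤ 0 := by
        rw [this]
        apply Finset.sum_nonpos
        intro k _
        have h1 : ⟪a k, β⟫ ≤ 0 := by rw [real_inner_comm]; exact h k
        exact mul_nonpos_of_nonneg_of_nonpos (hβp k) h1
      linarith
    have hβne : β ≠ a j := hβns j
    obtain ⟨hγΦ, hγp⟩ := refl_pos hΦ ha hβΦ hβp hβne
    set γ := reflFormula (a j) β with hγdef
    have hγw : ¬∃ l : List (Fin d), ∃ k, γ = prodS a l (a k) := by
      rintro ⟨l, k, hlk⟩
      refine hβw ⟨j :: l, k, ?_⟩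
      rw [prodS_cons]
      show β = sE (a j) (prodS a l (a k))
      rw [← hlk, hγdef]
      exact (reflFormula_invol (a j) β).symm
    have hγS : γ ∈ S := ⟨hγΦ, hγp, hγw⟩
    have hlt : ∑ k, (bas ha).repr γ k < ∑ k, (bas ha).repr β k := by
      have hc : 0 < (2*⟪β, a j⟫)/⟪a j, a j⟫ := div_pos (by linarith) (Q_pos hΦ ha j)
      have hrepr : ∀ k, (bas ha).repr γ k =
          (bas ha).repr β k - ((2*⟪β, a j⟫)/⟪a j, a j⟫) * (if j = k then 1 else 0) := by
        intro k
        show (bas ha).repr (β - _ • a j) k = _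
        rw [map_sub, map_smul]
        simp only [Finsupp.sub_apply, Finsupp.smul_apply, repr_a, smul_eq_mul]
      rw [Finset.sum_congr rfl fun k _ => hrepr k, Finset.sum_sub_distrib]
      have : ∑ k, ((2*⟪β, a j⟫)/⟪a j, a j⟫) * (if j = k then 1 else 0)
          = (2*⟪β, a j⟫)/⟪a j, a j⟫ := by
        rw [← Finset.mul_sum]
        simp
      rw [this]
      linarith
    exact absurd (hβmin γ hγS) (by linarith)
  rcases pos_total ha hβ with hp | hp
  · exact hposcase β hβ hp
  · have hnegβ : -β ∈ Φ := by
      have h1 : reflFormula β β = -β := reflFormula_self (hΦ.ne_zero β hβ)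
      rw [← h1, ← hΦ.refl_maps β hβ]
      exact ⟨β, hβ, rfl⟩
    obtain ⟨l, j, hlj⟩ := hposcase (-β) hnegβ hp
    refine ⟨l ++ [j], j, ?_⟩
    rw [prodS_concat]
    show β = prodS a l (sE (a j) (a j))
    have : sE (a j) (a j) = -(a j) := by
      rw [sE_apply]
      exact reflFormula_self (a_ne_zero hΦ ha j)
    rw [this, map_neg, ← hlj, neg_neg]

lemma weyl_word (hΦ : IsRootSystem Φ) (ha : IsSimpleSystem Φ a) {w : V ≃ₗ[ℝ] V}
    (hw : w ∈ weylGroup Φ) : ∃ l : List (Fin d), w = prodS a l := by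
  induction hw using Subgroup.closure_induction with
  | mem g hg =>
    obtain ⟨α, hα, hr⟩ := hg
    obtain ⟨l, j, hlj⟩ := root_eq_word hΦ ha hα
    refine ⟨l ++ [j] ++ l.reverse, ?_⟩
    have hconj : sE α = prodS a l * sE (a j) * (prodS a l)⁻¹ := by
      rw [hlj]
      exact sE_conj (fun x y => weyl_inner (prodS_mem ha l) x y) (a j)
    rw [IsReflection.eq_sE hr, hconj, prodS_append, prodS_append, prodS_inv]
    simp [prodS_concat, prodS_nil, prodS_singleton, mul_assoc]
  | one => exact ⟨[], rfl⟩
  | mul g h _ _ ih1 ih2 =>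
    obtain ⟨l1, rfl⟩ := ih1
    obtain ⟨l2, rfl⟩ := ih2
    exact ⟨l1 ++ l2, (prodS_append l1 l2).symm⟩
  | inv g _ ih =>
    obtain ⟨l, rfl⟩ := ih
    exact ⟨l.reverse, prodS_inv l⟩

lemma exchange (hΦ : IsRootSystem Φ) (ha : IsSimpleSystem Φ a) :
    ∀ l : List (Fin d), ∀ j : Fin d, Pos ha (-(prodS a l (a j))) →
    ∃ l' : List (Fin d), l'.length + 1 = l.length ∧ prodS a l' = prodS a l * sE (a j) := by
  intro l
  induction l with
  | nil =>
    intro j hneg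
    exfalso
    rw [prodS_nil] at hneg
    exact a_ne_zero hΦ ha j (eq_zero_of_pos_neg ha (pos_a ha j) hneg)
  | cons t rest ih =>
    intro j hneg
    set u := prodS a rest with hu
    have huj : u (a j) ∈ Φ := weyl_mem_root hΦ (prodS_mem ha rest) (ha.mem j)
    have hcons : prodS a (t :: rest) (a j) = sE (a t) (u (a j)) := by
      rw [prodS_cons]; rfl
    rcases pos_total ha huj with hp | hp
    · -- u (a j) positive; deduce u (a j) = a t
      have huat : u (a j) = a t := by
        by_contra hne
        have := refl_pos hΦ ha huj hp hne
        have h0 : sE (a t) (u (a j)) = 0 := by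
          apply eq_zero_of_pos_neg ha
          · exact this.2
          · rw [← hcons]; exact hneg
        have : sE (a t) (u (a j)) ∈ Φ := by rw [sE_apply]; exact this.1
        exact hΦ.ne_zero _ this h0
      refine ⟨rest, rfl, ?_⟩
      have hconj : sE (a t) = u * sE (a j) * u⁻¹ := by
        rw [← huat]
        exact sE_conj (fun x y => weyl_inner (prodS_mem ha rest) x y) (a j)
      rw [prodS_cons, ← hu, hconj]
      rw [inv_mul_cancel_right, mul_assoc, sE_mul_self, mul_one]
    · -- u (a j) negative; use ih
      obtain ⟨rest', hlen, hprod⟩ := ih j hp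
      refine ⟨t :: rest', by simp [← hlen], ?_⟩
      rw [prodS_cons, hprod, prodS_cons, ← hu, mul_assoc]

lemma eq_one_of_preserves_pos (hΦ : IsRootSystem Φ) (ha : IsSimpleSystem Φ a) :
    ∀ (n : ℕ) (l : List (Fin d)), l.length = n →
    (∀ β ∈ Φ, Pos ha β → Pos ha (prodS a l β)) → prodS a l = 1 := by
  intro n
  induction n using Nat.strong_induction_on with
  | _ n ihn =>
    intro l hlen hpres
    rcases List.eq_nil_or_concat l with rfl | ⟨l₀, j, rfl⟩
    · rfl
    · have hconcat : prodS a (l₀.concat j) = prodS a l₀ * sE (a j) := by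
        rw [List.concat_eq_append, prodS_concat]
      have haj : prodS a (l₀.concat j) (a j) = -(prodS a l₀ (a j)) := by
        rw [hconcat]
        show prodS a l₀ (sE (a j) (a j)) = _
        rw [sE_apply, reflFormula_self (a_ne_zero hΦ ha j), map_neg]
      have hneg : Pos ha (-(prodS a l₀ (a j))) := by
        rw [← haj]
        exact hpres (a j) (ha.mem j) (pos_a ha j)
      obtain ⟨l', hlen', hprod⟩ := exchange hΦ ha l₀ j hneg
      have hll : prodS a l' = prodS a (l₀.concat j) := by rw [hprod, hconcat]
      have hlenlt : l'.length < n := by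
        rw [← hlen]
        rw [List.length_concat]
        omega
      have := ihn l'.length hlenlt l' rfl (by rw [hll]; exact hpres)
      rw [← hll, this]
lemma pos_of_pos_simples (ha : IsSimpleSystem Φ a) {w : V ≃ₗ[ℝ] V}
    (hall : ∀ j, Pos ha (w (a j))) {β : V} (hp : Pos ha β) : Pos ha (w β) := by
  intro m
  have hexp : β = ∑ k, (bas ha).repr β k • a k := by
    conv_lhs => rw [← Module.Basis.sum_repr (bas ha) β]
    exact Finset.sum_congr rfl fun k _ => by rw [bas_eq]
  have hwβ : w β = ∑ k, (bas ha).repr β k • w (a k) := by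
    conv_lhs => rw [hexp]
    rw [map_sum]
    exact Finset.sum_congr rfl fun k _ => by rw [map_smul]
  rw [hwβ, map_sum, Finsupp.finset_sum_apply]
  apply Finset.sum_nonneg
  intro k _
  rw [map_smul, Finsupp.smul_apply, smul_eq_mul]
  exact mul_nonneg (hp k) (hall k m)

lemma inner_dom_nonneg (ha : IsSimpleSystem Φ a) {v : V} (hv : ∀ j, 0 ≤ ⟪v, a j⟫)
    {x : V} (hx : Pos ha x) : 0 ≤ ⟪v, x⟫ := by
  have hexp : x = ∑ k, (bas ha).repr x k • a k := by
    conv_lhs => rw [← Module.Basis.sum_repr (bas ha) x]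
    exact Finset.sum_congr rfl fun k _ => by rw [bas_eq]
  rw [hexp, inner_sum]
  apply Finset.sum_nonneg
  intro k _
  rw [real_inner_smul_right]
  exact mul_nonneg (hx k) (hv k)

lemma NS_decrease (hΦ : IsRootSystem Φ) (ha : IsSimpleSystem Φ a) {w : V ≃ₗ[ℝ] V}
    {j : Fin d} (hneg : Pos ha (-(w (a j)))) :
    ({β | β ∈ Φ ∧ Pos ha β ∧ Pos ha (-((w * sE (a j)) β))}).ncard <
      ({β | β ∈ Φ ∧ Pos ha β ∧ Pos ha (-(w β))}).ncard := by
  set NS' : Set V := {β | β ∈ Φ ∧ Pos ha β ∧ Pos ha (-((w * sE (a j)) β))}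
  set NS : Set V := {β | β ∈ Φ ∧ Pos ha β ∧ Pos ha (-(w β))}
  have hNSfin : NS.Finite := hΦ.finite.subset fun β hβ => hβ.1
  have hajNS : a j ∈ NS := ⟨ha.mem j, pos_a ha j, hneg⟩
  have hmaps : ∀ β ∈ NS', sE (a j) β ∈ NS \ {a j} := by
    rintro β ⟨hβΦ, hβp, hβn⟩
    have hmul : (w * sE (a j)) β = w (sE (a j) β) := rfl
    have hβne : β ≠ a j := by
      rintro rfl
      have h1 : sE (a j) (a j) = -(a j) := by
        rw [sE_apply]; exact reflFormula_self (a_ne_zero hΦ ha j)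
      rw [hmul, h1, map_neg, neg_neg] at hβn
      have h0 := eq_zero_of_pos_neg ha hβn hneg
      have : a j = 0 := by
        have := (LinearEquiv.map_eq_zero_iff w).mp h0
        exact this
      exact a_ne_zero hΦ ha j this
    obtain ⟨hmem, hposs⟩ := refl_pos hΦ ha hβΦ hβp hβne
    refine ⟨⟨hmem, hposs, ?_⟩, ?_⟩
    · rw [← hmul]; exact hβn
    · intro hcon
      rw [Set.mem_singleton_iff] at hcon
      have hβeq : β = sE (a j) (a j) := by
        have h4 := congrArg (sE (a j)) hcon
        rw [← h4]
        exact (reflFormula_invol (a j) β).symm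
      rw [sE_apply, reflFormula_self (a_ne_zero hΦ ha j)] at hβeq
      have h0 := eq_zero_of_pos_neg ha (pos_a ha j) (by rw [← hβeq]; exact hβp)
      exact a_ne_zero hΦ ha j h0
  have hinj : Set.InjOn (fun β => sE (a j) β) NS' := fun x _ y _ h =>
    (sE (a j)).injective h
  have h1 : NS'.ncard ≤ (NS \ {a j}).ncard :=
    Set.ncard_le_ncard_of_injOn _ hmaps hinj (hNSfin.subset Set.diff_subset)
  have h2 : (NS \ {a j}).ncard < NS.ncard := by
    apply Set.ncard_lt_ncard _ hNSfin
    rw [Set.ssubset_iff_of_subset Set.diff_subset]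
    exact ⟨a j, hajNS, fun hc => hc.2 rfl⟩
  omega

lemma steinberg (hΦ : IsRootSystem Φ) (ha : IsSimpleSystem Φ a) :
    ∀ (n : ℕ) (w : V ≃ₗ[ℝ] V), w ∈ weylGroup Φ →
    ({β | β ∈ Φ ∧ Pos ha β ∧ Pos ha (-(w β))}).ncard = n →
    ∀ v : V, (∀ j, 0 ≤ ⟪v, a j⟫) → w v = v → w ∈ parabolic a {j | ⟪v, a j⟫ = 0} := by
  intro n
  induction n using Nat.strong_induction_on with
  | _ n ihn =>
    intro w hw hcard v hv hwv
    by_cases hall : ∀ j, Pos ha (w (a j))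
    · obtain ⟨l, rfl⟩ := weyl_word hΦ ha hw
      have h1 : prodS a l = 1 := eq_one_of_preserves_pos hΦ ha l.length l rfl
        (fun β _ hp => pos_of_pos_simples ha hall hp)
      rw [h1]
      exact one_mem _
    · push_neg at hall
      obtain ⟨j, hj⟩ := hall
      have hwj : w (a j) ∈ Φ := weyl_mem_root hΦ hw (ha.mem j)
      have hneg : Pos ha (-(w (a j))) := (pos_total ha hwj).resolve_left hj
      have hvj : ⟪v, a j⟫ = 0 := by
        have h1 : ⟪v, a j⟫ = ⟪v, w (a j)⟫ := by
          conv_lhs => rw [← weyl_inner hw v (a j), hwv]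
        have h2 : 0 ≤ ⟪v, -(w (a j))⟫ := inner_dom_nonneg ha hv hneg
        rw [inner_neg_right] at h2
        have h3 := hv j
        linarith
      have hsv : sE (a j) v = v := by
        rw [sE_apply, reflFormula, hvj]
        norm_num
      have hw' : w * sE (a j) ∈ weylGroup Φ :=
        mul_mem hw (Subgroup.subset_closure ⟨a j, ha.mem j, isReflection_sE (a j)⟩)
      have hwv' : (w * sE (a j)) v = v := by
        show w (sE (a j) v) = v
        rw [hsv, hwv]
      have hdec := NS_decrease hΦ ha hneg
      rw [hcard] at hdec
      have hmem' := ihn _ hdec (w * sE (a j)) hw' rfl v hv hwv'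
      have hsj : sE (a j) ∈ parabolic a {k | ⟪v, a k⟫ = 0} :=
        Subgroup.subset_closure ⟨j, hvj, isReflection_sE (a j)⟩
      have : w = (w * sE (a j)) * sE (a j) := by
        rw [mul_assoc, sE_mul_self, mul_one]
      rw [this]
      exact mul_mem hmem' hsj
end Simple
end WallPair

/-- **Stabilizer of a wall-crossing inequality** (from the proof of Theorem 7.2): the set of
`w ∈ W` fixing the unordered pair `{λ_i, s_i λ_i}` is exactly the parabolic subgroup
`W_{[d]∖N(i)}`; consequently the `W`-orbit of this pair has `|W| / |W_{[d]∖N(i)}|` elements. -/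
theorem stabilizer_of_wall_pair_eq_parabolic
    {V : Type*} [NormedAddCommGroup V] [InnerProductSpace ℝ V] [FiniteDimensional ℝ V]
    {Φ : Set V} (hΦ : IsRootSystem Φ) {d : ℕ} {a : Fin d → V} (ha : IsSimpleSystem Φ a)
    {lam : Fin d → V} (hlam : ∀ i j, ⟪lam i, coroot (a j)⟫ = if i = j then (1 : ℝ) else 0)
    (i : Fin d) :
    {w : V ≃ₗ[ℝ] V | w ∈ weylGroup Φ ∧
        ({w (lam i), w (reflFormula (a i) (lam i))} : Set V) =
          ({lam i, reflFormula (a i) (lam i)} : Set V)} =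
      (parabolic a {k | k ∉ Nset a i} : Set (V ≃ₗ[ℝ] V)) ∧
    Set.ncard {p : Set V | ∃ w ∈ weylGroup Φ,
        p = ({w (lam i), w (reflFormula (a i) (lam i))} : Set V)} =
      Nat.card ↥(weylGroup Φ) / Nat.card ↥(parabolic a {k | k ∉ Nset a i}) := by
  classical
  open WallPair in
  have hinner : ∀ j k, ⟪lam j, a k⟫ = if j = k then ⟪a k, a k⟫/2 else 0 := by
    intro j k
    have h := hlam j k
    rw [coroot, real_inner_smul_right] at h
    have hQ : ⟪a k, a k⟫ ≠ 0 := ne_of_gt (WallPair.Q_pos hΦ ha k)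
    by_cases hjk : j = k
    · rw [if_pos hjk] at h ⊢
      field_simp at h
      linarith
    · rw [if_neg hjk] at h ⊢
      exact (mul_eq_zero.mp h).resolve_left (div_ne_zero two_ne_zero hQ)
  have hQi : ⟪a i, a i⟫ ≠ 0 := ne_of_gt (WallPair.Q_pos hΦ ha i)
  have hx2 : reflFormula (a i) (lam i) = lam i - a i := by
    rw [reflFormula, hinner i i, if_pos rfl,
      show (2 * (⟪a i, a i⟫/2))/⟪a i,a i⟫ = 1 by field_simp, one_smul]
  have hsx2 : reflFormula (a i) (lam i - a i) = lam i := by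
    rw [reflFormula, inner_sub_left, hinner i i, if_pos rfl,
      show (2*(⟪a i,a i⟫/2 - ⟪a i,a i⟫))/⟪a i,a i⟫ = -1 by field_simp; ring]
    module
  set x₁ : V := lam i with hx₁def
  set x₂ : V := lam i - a i with hx₂def
  set v : V := x₁ + x₂ with hvdef
  have hvinner : ∀ j, ⟪v, a j⟫ = if i = j then 0 else -⟪a i, a j⟫ := by
    intro j
    rw [hvdef, inner_add_left, hx₂def, inner_sub_left, hinner i j]
    by_cases hij : i = j
    · rw [if_pos hij, if_pos hij, ← hij]
      ring
    · rw [if_neg hij, if_neg hij]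
      ring
  have hv : ∀ j, 0 ≤ ⟪v, a j⟫ := by
    intro j
    rw [hvinner j]
    by_cases hij : i = j
    · rw [if_pos hij]
    · rw [if_neg hij]
      have := WallPair.inner_nonpos hΦ ha hij
      linarith
  have hJ : {j | ⟪v, a j⟫ = 0} = {k | k ∉ Nset a i} := by
    ext j
    simp only [Set.mem_setOf_eq, Nset, Finset.mem_filter, Finset.mem_univ, true_and, not_and,
      ne_eq, hvinner j]
    by_cases hij : i = j
    · simp [hij]
    · rw [if_neg hij, neg_eq_zero]
      constructor
      · intro h _; simpa using h
      · intro h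
        simpa using h (fun hc => hij hc.symm)
  have hne : x₁ ≠ x₂ := by
    intro h
    exact WallPair.a_ne_zero hΦ ha i (sub_eq_self.mp h.symm)
  have hsEi : ∀ x, WallPair.sE (a i) x = reflFormula (a i) x := fun x => rfl
  have hsEiW : WallPair.sE (a i) ∈ weylGroup Φ :=
    Subgroup.subset_closure ⟨a i, ha.mem i, WallPair.isReflection_sE (a i)⟩
  have hiNotN : i ∉ Nset a i := by simp [Nset]
  have hsEiP : WallPair.sE (a i) ∈ parabolic a {k | k ∉ Nset a i} :=
    Subgroup.subset_closure ⟨i, hiNotN, WallPair.isReflection_sE (a i)⟩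
  have hpart1 : {w : V ≃ₗ[ℝ] V | w ∈ weylGroup Φ ∧
        ({w (lam i), w (reflFormula (a i) (lam i))} : Set V) =
          ({lam i, reflFormula (a i) (lam i)} : Set V)} =
      (parabolic a {k | k ∉ Nset a i} : Set (V ≃ₗ[ℝ] V)) := by
    ext w
    simp only [Set.mem_setOf_eq, SetLike.mem_coe, hx2]
    constructor
    · rintro ⟨hw, hpair⟩
      rw [← hx₁def, hx2] at hpair
      have h1 : w x₁ ∈ ({x₁, x₂} : Set V) := by
        rw [← hpair]; exact Set.mem_insert _ _
      rcases h1 with h1 | h1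
      · -- fix case
        have h2 : w x₂ = x₂ := by
          have hx2mem : x₂ ∈ ({w x₁, w x₂} : Set V) := by
            rw [hpair]; exact Set.mem_insert_of_mem _ rfl
          simp only [Set.mem_insert_iff, Set.mem_singleton_iff] at hx2mem
          rcases hx2mem with h2 | h2
          · exact absurd (h2.trans h1) (Ne.symm hne)
          · exact h2.symm
        have hwv : w v = v := by rw [hvdef, map_add, h1, h2]
        have := WallPair.steinberg hΦ ha _ w hw rfl v hv hwv
        rwa [hJ] at this
      · -- swap case
        rw [Set.mem_singleton_iff] at h1
        have h2 : w x₂ = x₁ := by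
          have hx1mem : x₁ ∈ ({w x₁, w x₂} : Set V) := by
            rw [hpair]; exact Set.mem_insert _ _
          simp only [Set.mem_insert_iff, Set.mem_singleton_iff] at hx1mem
          rcases hx1mem with h2 | h2
          · exact absurd (h2.trans h1) hne
          · exact h2.symm
        set u := WallPair.sE (a i) * w with hu
        have hu1 : u x₁ = x₁ := by
          show WallPair.sE (a i) (w x₁) = x₁
          rw [h1, hsEi, hsx2]
        have hu2 : u x₂ = x₂ := by
          show WallPair.sE (a i) (w x₂) = x₂
          rw [h2, hsEi, hx2]
        have huv : u v = v := by rw [hvdef, map_add, hu1, hu2]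
        have huW : u ∈ weylGroup Φ := mul_mem hsEiW hw
        have huP := WallPair.steinberg hΦ ha _ u huW rfl v hv huv
        rw [hJ] at huP
        have hwu : w = WallPair.sE (a i) * u := by
          rw [hu, ← mul_assoc, WallPair.sE_mul_self, one_mul]
        rw [hwu]
        exact mul_mem hsEiP huP
    · intro hw
      have key : w ∈ weylGroup Φ ∧ ⇑w '' {x₁, x₂} = {x₁, x₂} := by
        induction hw using Subgroup.closure_induction with
        | mem g hg =>
          obtain ⟨k, hkI, hr⟩ := hg
          have hgW : g ∈ weylGroup Φ :=
            Subgroup.subset_closure ⟨a k, ha.mem k, hr⟩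
          refine ⟨hgW, ?_⟩
          rw [Set.image_pair]
          by_cases hki : k = i
          · subst hki
            rw [hr x₁, hr x₂, hx₁def]
            rw [hx2, hsx2]
            exact Set.pair_comm _ _
          · have h0 : ⟪a i, a k⟫ = 0 := by
              by_contra h0
              exact hkI (Finset.mem_filter.mpr ⟨Finset.mem_univ k, hki, h0⟩)
            have hg1 : reflFormula (a k) x₁ = x₁ := by
              rw [hx₁def, reflFormula, hinner i k, if_neg (fun hc => hki hc.symm)]
              norm_num
            have hg2 : reflFormula (a k) x₂ = x₂ := by
              rw [hx₂def, reflFormula, inner_sub_left, hinner i k,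
                if_neg (fun hc => hki hc.symm), h0]
              norm_num
            rw [hr x₁, hr x₂, hg1, hg2]
        | one => exact ⟨one_mem _, by simp⟩
        | mul g h _ _ ih1 ih2 =>
          refine ⟨mul_mem ih1.1 ih2.1, ?_⟩
          have hcomp : ⇑(g * h) = ⇑g ∘ ⇑h := rfl
          rw [hcomp, Set.image_comp, ih2.2, ih1.2]
        | inv g _ ih =>
          refine ⟨inv_mem ih.1, ?_⟩
          calc ⇑g⁻¹ '' {x₁, x₂} = ⇑g⁻¹ '' (⇑g '' {x₁, x₂}) := by rw [ih.2]
            _ = {x₁, x₂} := by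
              rw [← Set.image_comp]
              have : ⇑g⁻¹ ∘ ⇑g = id := by
                funext x
                show (g⁻¹ * g) x = x
                rw [inv_mul_cancel]
                rfl
              rw [this, Set.image_id]
      refine ⟨key.1, ?_⟩
      rw [← hx₁def, hx2]
      exact (Set.image_pair _ _ _).symm.trans key.2
  refine ⟨hpart1, ?_⟩
  -- counting
  haveI hWfin : Finite ↥(weylGroup Φ) := WallPair.weyl_finite hΦ
  set W : Subgroup (V ≃ₗ[ℝ] V) := weylGroup Φ with hWdef
  set P : Subgroup (V ≃ₗ[ℝ] V) := parabolic a {k | k ∉ Nset a i} with hPdef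
  have hPle : P ≤ W := Subgroup.closure_mono (by
    rintro g ⟨k, _, hrefl⟩
    exact ⟨a k, ha.mem k, hrefl⟩)
  set K : Subgroup ↥W := P.subgroupOf W with hKdef
  haveI : Finite ↥K := Finite.of_injective (fun x : ↥K => (x : ↥W)) Subtype.val_injective
  let f : ↥W → Set V := fun w => (w : V ≃ₗ[ℝ] V) '' {x₁, x₂}
  have hstab : ∀ g : V ≃ₗ[ℝ] V, g ∈ W → (⇑g '' {x₁, x₂} = {x₁, x₂} ↔ g ∈ P) := by
    intro g hgW
    constructor
    · intro him
      have : g ∈ {w : V ≃ₗ[ℝ] V | w ∈ weylGroup Φ ∧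
          ({w (lam i), w (reflFormula (a i) (lam i))} : Set V) =
            ({lam i, reflFormula (a i) (lam i)} : Set V)} := by
        refine ⟨hgW, ?_⟩
        rw [hx2]
        exact ((Set.image_pair (⇑g) x₁ x₂).symm.trans him)
      rw [hpart1] at this
      exact this
    · intro hgP
      have : g ∈ {w : V ≃ₗ[ℝ] V | w ∈ weylGroup Φ ∧
          ({w (lam i), w (reflFormula (a i) (lam i))} : Set V) =
            ({lam i, reflFormula (a i) (lam i)} : Set V)} := by
        rw [hpart1]; exact hgP
      obtain ⟨_, hp⟩ := this
      rw [hx2] at hp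
      rw [Set.image_pair]
      exact hp
  have hker : ∀ w₁ w₂ : ↥W, f w₁ = f w₂ ↔ w₁⁻¹ * w₂ ∈ K := by
    intro w₁ w₂
    have hcoe : ((w₁⁻¹ * w₂ : ↥W) : V ≃ₗ[ℝ] V) = (w₁ : V ≃ₗ[ℝ] V)⁻¹ * (w₂ : V ≃ₗ[ℝ] V) := rfl
    have hcomp : ⇑((w₁ : V ≃ₗ[ℝ] V)⁻¹ * (w₂ : V ≃ₗ[ℝ] V)) =
        ⇑(w₁ : V ≃ₗ[ℝ] V)⁻¹ ∘ ⇑(w₂ : V ≃ₗ[ℝ] V) := rfl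
    constructor
    · intro h
      rw [hKdef, Subgroup.mem_subgroupOf, hcoe]
      rw [← hstab _ (mul_mem (inv_mem w₁.2) w₂.2)]
      rw [hcomp, Set.image_comp]
      show ⇑(w₁ : V ≃ₗ[ℝ] V)⁻¹ '' (f w₂) = _
      rw [← h]
      show ⇑(w₁ : V ≃ₗ[ℝ] V)⁻¹ '' (⇑(w₁ : V ≃ₗ[ℝ] V) '' {x₁, x₂}) = _
      rw [← Set.image_comp]
      have : ⇑(w₁ : V ≃ₗ[ℝ] V)⁻¹ ∘ ⇑(w₁ : V ≃ₗ[ℝ] V) = id := by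
        funext x
        show ((w₁ : V ≃ₗ[ℝ] V)⁻¹ * (w₁ : V ≃ₗ[ℝ] V)) x = x
        rw [inv_mul_cancel]
        rfl
      rw [this, Set.image_id]
    · intro h
      rw [hKdef, Subgroup.mem_subgroupOf, hcoe] at h
      have him := (hstab _ (mul_mem (inv_mem w₁.2) w₂.2)).mpr h
      rw [hcomp, Set.image_comp] at him
      have := congrArg (Set.image (⇑(w₁ : V ≃ₗ[ℝ] V))) him
      rw [← Set.image_comp] at this
      have hid : ⇑(w₁ : V ≃ₗ[ℝ] V) ∘ ⇑(w₁ : V ≃ₗ[ℝ] V)⁻¹ = id := by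
        funext x
        show ((w₁ : V ≃ₗ[ℝ] V) * (w₁ : V ≃ₗ[ℝ] V)⁻¹) x = x
        rw [mul_inv_cancel]
        rfl
      rw [hid, Set.image_id] at this
      exact this.symm
  let F : ↥W ⧸ K → Set V := fun q => Quotient.liftOn' q f (by
    intro w₁ w₂ hrel
    rw [QuotientGroup.leftRel_apply] at hrel
    exact (hker w₁ w₂).mpr hrel)
  have hFinj : Function.Injective F := by
    intro q₁ q₂
    refine Quotient.inductionOn₂' q₁ q₂ ?_
    intro w₁ w₂ h
    apply Quotient.sound'
    rw [QuotientGroup.leftRel_apply]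
    exact (hker w₁ w₂).mp h
  have hrange : Set.range F = Set.range f := by
    ext p
    constructor
    · rintro ⟨q, rfl⟩
      induction q using Quotient.inductionOn' with
      | h w => exact ⟨w, rfl⟩
    · rintro ⟨w, rfl⟩
      exact ⟨Quotient.mk'' w, rfl⟩
  have horbit : {p : Set V | ∃ w ∈ weylGroup Φ,
      p = ({w (lam i), w (reflFormula (a i) (lam i))} : Set V)} = Set.range f := by
    ext p
    constructor
    · rintro ⟨w, hw, rfl⟩
      exact ⟨⟨w, hw⟩, by rw [hx2]; exact (Set.image_pair (⇑w) x₁ x₂)⟩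
    · rintro ⟨w, rfl⟩
      exact ⟨(w : V ≃ₗ[ℝ] V), w.2, by rw [hx2]; exact (Set.image_pair _ x₁ x₂)⟩
  have hKpos : 0 < Nat.card ↥K := Nat.card_pos
  have hKP : Nat.card ↥K = Nat.card ↥P :=
    Nat.card_congr (Subgroup.subgroupOfEquivOfLe hPle).toEquiv
  have hindex : Nat.card ↥W = K.index * Nat.card ↥K := by
    rw [mul_comm]
    exact (Subgroup.card_mul_index K).symm
  have hdiv : K.index = Nat.card ↥W / Nat.card ↥K :=
    (Nat.div_eq_of_eq_mul_left hKpos hindex).symm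
  calc Set.ncard {p : Set V | ∃ w ∈ weylGroup Φ,
      p = ({w (lam i), w (reflFormula (a i) (lam i))} : Set V)}
      = (Set.range F).ncard := by rw [horbit, hrange]
    _ = Nat.card ↥(Set.range F) := (Nat.card_coe_set_eq _).symm
    _ = Nat.card (↥W ⧸ K) := Nat.card_range_of_injective hFinj
    _ = K.index := rfl
    _ = Nat.card ↥W / Nat.card ↥K := hdiv
    _ = Nat.card ↥(weylGroup Φ) / Nat.card ↥(parabolic a {k | k ∉ Nset a i}) := by
        rw [hKP]
end

section
/- (Proposition 6.7) A W-invariant function h : R → ℝ (that is, h(wλ) = h(λ) for all w ∈ W and λ ∈ R) satisfies the local Φ-submodular inequalities if and only if there exist nonnegative reals c_1,…,c_d such that h(λ_i) = Σ_{k=1}^d c_k (A^{-1})_{ki} for every 1 ≤ i ≤ d. Equivalently: the symmetric Φ-submodular cone, identified with a cone in ℝ^d via h ↦ (h(λ_1),…,h(λ_d)), is the simplicial cone generated by the rows of the inverse Cartan matrix A^{-1}. -/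
open scoped RealInnerProductSpace Pointwise

/-- The Cartan matrix of the simple system `a`. -/
noncomputable def cartanMatrix {V : Type*} [NormedAddCommGroup V] [InnerProductSpace ℝ V]
    {d : ℕ} (a : Fin d → V) : Matrix (Fin d) (Fin d) ℝ :=
  Matrix.of fun i j => cartan a i j


section Aux

variable {V : Type*} [NormedAddCommGroup V] [InnerProductSpace ℝ V]

/-- The reflection `reflFormula α` as a linear map. -/
noncomputable def reflLM (α : V) : V →ₗ[ℝ] V where
  toFun := reflFormula α
  map_add' x y := by
    simp only [reflFormula, inner_add_left, mul_add, add_div, add_smul]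
    abel
  map_smul' c x := by
    simp only [reflFormula, real_inner_smul_left, RingHom.id_apply, smul_sub, smul_smul]
    congr 1
    ring

lemma reflFormula_invol (α : V) (hα : ⟪α, α⟫ ≠ 0) (x : V) :
    reflFormula α (reflFormula α x) = x := by
  simp only [reflFormula, inner_sub_left, real_inner_smul_left]
  have hc : (2 * (⟪x, α⟫ - 2 * ⟪x, α⟫ / ⟪α, α⟫ * ⟪α, α⟫)) / ⟪α, α⟫
      = -(2 * ⟪x, α⟫ / ⟪α, α⟫) := by
    field_simp
    ring
  rw [hc, neg_smul, sub_neg_eq_add, sub_add_cancel]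

/-- The reflection `reflFormula α` as a linear equivalence, for `α ≠ 0`. -/
noncomputable def sRefl (α : V) (hα : ⟪α, α⟫ ≠ 0) : V ≃ₗ[ℝ] V :=
  LinearEquiv.ofLinear (reflLM α) (reflLM α)
    (by ext x; exact reflFormula_invol α hα x)
    (by ext x; exact reflFormula_invol α hα x)

@[simp] lemma sRefl_apply (α : V) (hα : ⟪α, α⟫ ≠ 0) (x : V) :
    sRefl α hα x = reflFormula α x := rfl

end Aux

/-- **Proposition 6.7**: a `W`-invariant function `h : R → ℝ` is Φ-submodular if and only if
the vector `(h(λ_1), …, h(λ_d))` is a nonnegative combination of the rows of the inverse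
Cartan matrix: the symmetric Φ-submodular cone is the simplicial cone generated by the rows
of `A⁻¹`. -/
theorem symmetric_submodular_cone_eq_inverse_cartan_cone
    {V : Type*} [NormedAddCommGroup V] [InnerProductSpace ℝ V] [FiniteDimensional ℝ V]
    {Φ : Set V} (hΦ : IsRootSystem Φ) {d : ℕ} {a : Fin d → V} (ha : IsSimpleSystem Φ a)
    {lam : Fin d → V} (hlam : ∀ i j, ⟪lam i, coroot (a j)⟫ = if i = j then (1 : ℝ) else 0)
    (h : V → ℝ)
    (hsym : ∀ w ∈ weylGroup Φ, ∀ x ∈ weightConjugates Φ lam, h (w x) = h x) :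
    SatisfiesLocal Φ a lam h ↔
      ∃ c : Fin d → ℝ, (∀ k, 0 ≤ c k) ∧
        ∀ i, h (lam i) = ∑ k, c k * (cartanMatrix a)⁻¹ k i := by
  classical
  have haneq : ∀ i, ⟪a i, a i⟫ ≠ 0 := fun i hc =>
    hΦ.ne_zero _ (ha.mem i) (inner_self_eq_zero.mp hc)
  set s : ∀ _ : Fin d, V ≃ₗ[ℝ] V := fun i => sRefl (a i) (haneq i) with hs
  have hsW : ∀ i, s i ∈ weylGroup Φ :=
    fun i => Subgroup.subset_closure ⟨a i, ha.mem i, fun x => rfl⟩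
  have hlamR : ∀ i, lam i ∈ weightConjugates Φ lam :=
    fun i => ⟨1, one_mem _, i, rfl⟩
  have hrR : ∀ i, reflFormula (a i) (lam i) ∈ weightConjugates Φ lam :=
    fun i => ⟨s i, hsW i, i, rfl⟩
  have h1 : ∀ w ∈ weylGroup Φ, ∀ i, h (w (lam i)) = h (lam i) :=
    fun w hw i => hsym w hw _ (hlamR i)
  have h2 : ∀ w ∈ weylGroup Φ, ∀ i, h (w (reflFormula (a i) (lam i))) = h (lam i) := by
    intro w hw i
    rw [hsym w hw _ (hrR i)]
    have := hsym (s i) (hsW i) (lam i) (hlamR i)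
    exact this
  have hdiag : ∀ i, cartan a i i = 2 := by
    intro i
    simp only [cartan, coroot, real_inner_smul_left]
    rw [div_mul_cancel₀ _ (haneq i)]
  have hfull : ∀ i, ∑ j, cartan a j i * h (lam j)
      = 2 * h (lam i) + ∑ j ∈ Nset a i, cartan a j i * h (lam j) := by
    intro i
    have hni : i ∉ Nset a i := by simp [Nset]
    have hsub : ∑ j ∈ insert i (Nset a i), cartan a j i * h (lam j)
        = ∑ j, cartan a j i * h (lam j) := by
      refine Finset.sum_subset (Finset.subset_univ _) ?_
      intro j _ hj
      simp only [Finset.mem_insert, not_or] at hj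
      have hz : ⟪a i, a j⟫ = 0 := by
        by_contra hne
        exact hj.2 (by simp [Nset, hj.1, hne])
      have hz' : cartan a j i = 0 := by
        have hzz : ⟪a j, a i⟫ = 0 := by rw [real_inner_comm]; exact hz
        simp [cartan, coroot, real_inner_smul_left, hzz]
      simp [hz']
    rw [← hsub, Finset.sum_insert hni, hdiag i]
  have hred : SatisfiesLocal Φ a lam h ↔ ∀ i, 0 ≤ ∑ j, cartan a j i * h (lam j) := by
    constructor
    · intro hl i
      have hli := hl 1 (one_mem _) i
      simp only [LinearEquiv.coe_one, id_eq] at hli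
      have h2' := h2 1 (one_mem _) i
      simp only [LinearEquiv.coe_one, id_eq] at h2'
      rw [h2'] at hli
      rw [hfull i]
      have hneg : ∑ x ∈ Nset a i, -cartan a x i * h (lam x)
          = -∑ j ∈ Nset a i, cartan a j i * h (lam j) := by
        simp [neg_mul]
      rw [hneg] at hli
      linarith [hli]
    · intro hc w hw i
      have hci := hc i
      rw [hfull i] at hci
      have hterm : ∀ j ∈ Nset a i, (-(cartan a j i)) * h (w (lam j))
          = -(cartan a j i * h (lam j)) := by
        intro j _
        rw [h1 w hw j]
        ring
      rw [Finset.sum_congr rfl hterm]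
      rw [h1 w hw i, h2 w hw i]
      have hneg : ∑ j ∈ Nset a i, -(cartan a j i * h (lam j))
          = -∑ j ∈ Nset a i, cartan a j i * h (lam j) := by
        simp
      rw [hneg]
      linarith [hci]
  rw [hred]
  set M : Matrix (Fin d) (Fin d) ℝ := cartanMatrix a with hM
  have hMapp : ∀ i j, M i j = cartan a i j := fun i j => rfl
  have hdet : M.det ≠ 0 := by
    intro h0
    obtain ⟨v, hv0, hmv⟩ := Matrix.exists_mulVec_eq_zero_iff.mpr h0
    set u : V := ∑ j, v j • a j with hu
    have hcu : ∀ i, ⟪a i, u⟫ = 0 := by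
      intro i
      have hmvi : M.mulVec v i = 0 := congrFun hmv i
      have h3 : ⟪coroot (a i), u⟫ = 0 := by
        rw [hu, inner_sum]
        simpa [Matrix.mulVec, dotProduct, hMapp, cartan,
          real_inner_smul_right, mul_comm] using hmvi
      have h4 : (2 / ⟪a i, a i⟫) * ⟪a i, u⟫ = 0 := by
        simpa [coroot, real_inner_smul_left] using h3
      exact (mul_eq_zero.mp h4).resolve_left (div_ne_zero two_ne_zero (haneq i))
    have hu0 : u = 0 := by
      have hself : ⟪u, u⟫ = 0 := by
        rw [show ⟪u, u⟫ = ⟪∑ j, v j • a j, u⟫ from by rw [← hu]]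
        rw [sum_inner]
        simp [real_inner_smul_left, hcu]
      exact inner_self_eq_zero.mp hself
    exact hv0 (funext (Fintype.linearIndependent_iff.mp ha.indep v (by rw [← hu]; exact hu0)))
  constructor
  · intro hpos
    refine ⟨fun k => ∑ j, cartan a j k * h (lam j), hpos, ?_⟩
    intro i
    calc h (lam i) = Matrix.vecMul (fun j => h (lam j)) (M * M⁻¹) i := by
          rw [Matrix.mul_nonsing_inv M (Ne.isUnit hdet), Matrix.vecMul_one]
      _ = Matrix.vecMul (Matrix.vecMul (fun j => h (lam j)) M) M⁻¹ i := by
          rw [Matrix.vecMul_vecMul]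
      _ = ∑ k, (∑ j, cartan a j k * h (lam j)) * (cartanMatrix a)⁻¹ k i := by
          simp only [Matrix.vecMul, dotProduct, ← hM]
          refine Finset.sum_congr rfl fun k _ => ?_
          congr 1
          exact Finset.sum_congr rfl fun j _ => by rw [hMapp, mul_comm]
  · rintro ⟨c, hc, hrep⟩ i
    have hv : (fun j => h (lam j)) = Matrix.vecMul c M⁻¹ := by
      funext j
      rw [hrep j]
      simp [Matrix.vecMul, dotProduct, ← hM]
    have hsumM : ∑ j, cartan a j i * h (lam j) = Matrix.vecMul (fun j => h (lam j)) M i := by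
      simp only [Matrix.vecMul, dotProduct]
      exact Finset.sum_congr rfl fun j _ => by rw [hMapp, mul_comm]
    rw [hsumM, hv, Matrix.vecMul_vecMul, Matrix.nonsing_inv_mul M (Ne.isUnit hdet), Matrix.vecMul_one]
    exact hc i
end
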